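/- arXiv:2310.01993 — 10 statements merged into one kernel-verified Lean document; each statement's English description precedes it below -/
import Mathlib

section
/- Left GL₂-invariance of quasi-Plücker coordinates (Proposition 2.2): let g be an invertible 2×2 matrix over R and A a 2×n matrix over R. For column indices i, j, k with i ∉ {j, k}, if the quasi-Plücker coordinates q^i_{jk}(A) and q^i_{jk}(g·A) are both defined, then q^i_{jk}(g·A) = q^i_{jk}(A). -/
/-- The quasi-Plücker coordinate `q^i_{jk}(A)` of a `2 × n` matrix `A` over a division ring. -/
noncomputable def qp {R : Type*} [DivisionRing R] {n : ℕ}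
    (A : Matrix (Fin 2) (Fin n) R) (i j k : Fin n) : R :=
  (A 0 j - A 0 i * (A 1 i)⁻¹ * A 1 j)⁻¹ * (A 0 k - A 0 i * (A 1 i)⁻¹ * A 1 k)

/-- `q^i_{jk}(A)` is said to be defined when `a_{2i} ≠ 0` and
`a_{1j} − a_{1i}·a_{2i}⁻¹·a_{2j} ≠ 0`. -/
def qpDefined {R : Type*} [DivisionRing R] {n : ℕ}
    (A : Matrix (Fin 2) (Fin n) R) (i j : Fin n) : Prop :=
  A 1 i ≠ 0 ∧ A 0 j - A 0 i * (A 1 i)⁻¹ * A 1 j ≠ 0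

private lemma key0 {R : Type*} [Ring R] (a b c d xi yi xs t w : R)
    (ht : t * (c * xi + d * yi) = 1) :
    (a * xs + b * (yi * w)) - (a * xi + b * yi) * t * (c * xs + d * (yi * w))
      = (a - (a * xi + b * yi) * t * c) * (xs - xi * w) := by
  have h1 : (a * xi + b * yi) * t * ((c * xi + d * yi) * w) = (a * xi + b * yi) * w := by
    rw [← mul_assoc, mul_assoc _ t _, ht, mul_one]
  calc (a * xs + b * (yi * w)) - (a * xi + b * yi) * t * (c * xs + d * (yi * w))
      = a * xs + b * (yi * w) - ((a * xi + b * yi) * t * (c * (xs - xi * w))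
          + (a * xi + b * yi) * t * ((c * xi + d * yi) * w)) := by noncomm_ring
    _ = a * xs + b * (yi * w) - ((a * xi + b * yi) * t * (c * (xs - xi * w))
          + (a * xi + b * yi) * w) := by rw [h1]
    _ = (a - (a * xi + b * yi) * t * c) * (xs - xi * w) := by noncomm_ring

private lemma key {R : Type*} [DivisionRing R] (a b c d xi yi xs ys : R)
    (hyi : yi ≠ 0) (hYi : c * xi + d * yi ≠ 0) :
    (a * xs + b * ys) - (a * xi + b * yi) * (c * xi + d * yi)⁻¹ * (c * xs + d * ys)
      = (a - (a * xi + b * yi) * (c * xi + d * yi)⁻¹ * c) * (xs - xi * yi⁻¹ * ys) := by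
  have ht : (c * xi + d * yi)⁻¹ * (c * xi + d * yi) = 1 := inv_mul_cancel₀ hYi
  have hw : yi * (yi⁻¹ * ys) = ys := by rw [← mul_assoc, mul_inv_cancel₀ hyi, one_mul]
  have := key0 a b c d xi yi xs (c * xi + d * yi)⁻¹ (yi⁻¹ * ys) ht
  rw [hw] at this
  rw [this, ← mul_assoc xi]

/-- Left GL₂-invariance of quasi-Plücker coordinates. -/
theorem stmt_0 {R : Type*} [DivisionRing R] {n : ℕ}
    (g : Matrix (Fin 2) (Fin 2) R) (hg : IsUnit g)
    (A : Matrix (Fin 2) (Fin n) R) (i j k : Fin n)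
    (hij : i ≠ j) (hik : i ≠ k)
    (hA : qpDefined A i j) (hgA : qpDefined (g * A) i j) :
    qp (g * A) i j k = qp A i j k := by
  have hm : ∀ r s, (g * A) r s = g r 0 * A 0 s + g r 1 * A 1 s := by
    intro r s
    simp [Matrix.mul_apply, Fin.sum_univ_two]
  have hyi : A 1 i ≠ 0 := hA.1
  have hYi : g 1 0 * A 0 i + g 1 1 * A 1 i ≠ 0 := by
    have := hgA.1; rwa [hm] at this
  have hkey := fun s => key (g 0 0) (g 0 1) (g 1 0) (g 1 1)
    (A 0 i) (A 1 i) (A 0 s) (A 1 s) hyi hYi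
  set u := g 0 0 - (g 0 0 * A 0 i + g 0 1 * A 1 i) * (g 1 0 * A 0 i + g 1 1 * A 1 i)⁻¹ * g 1 0
    with hu
  have hu0 : u ≠ 0 := by
    have h2 := hgA.2
    rw [show ((g * A) 0 j - (g * A) 0 i * ((g * A) 1 i)⁻¹ * (g * A) 1 j)
        = u * (A 0 j - A 0 i * (A 1 i)⁻¹ * A 1 j) by rw [hm, hm, hm, hm, hkey j]] at h2
    exact left_ne_zero_of_mul h2
  show ((g * A) 0 j - (g * A) 0 i * ((g * A) 1 i)⁻¹ * (g * A) 1 j)⁻¹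
      * ((g * A) 0 k - (g * A) 0 i * ((g * A) 1 i)⁻¹ * (g * A) 1 k) = qp A i j k
  rw [show ((g * A) 0 j - (g * A) 0 i * ((g * A) 1 i)⁻¹ * (g * A) 1 j)
      = u * (A 0 j - A 0 i * (A 1 i)⁻¹ * A 1 j) by rw [hm, hm, hm, hm, hkey j]]
  rw [show ((g * A) 0 k - (g * A) 0 i * ((g * A) 1 i)⁻¹ * (g * A) 1 k)
      = u * (A 0 k - A 0 i * (A 1 i)⁻¹ * A 1 k) by rw [hm, hm, hm, hm, hkey k]]
  rw [mul_inv_rev, mul_assoc, inv_mul_cancel_left₀ hu0]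
  rfl
end

section
/- Right diagonal action on quasi-Plücker coordinates (Proposition 2.3): let A be a 2×n matrix over R and Λ = diag(λ_1, …, λ_n) with all λ_s ≠ 0. For column indices i, j, k with i ∉ {j, k}, if q^i_{jk}(A) is defined, then q^i_{jk}(A·Λ) is defined and q^i_{jk}(A·Λ) = λ_j⁻¹ · q^i_{jk}(A) · λ_k. -/
/-- Right diagonal action on quasi-Plücker coordinates:
`q^i_{jk}(A·Λ) = λ_j⁻¹ · q^i_{jk}(A) · λ_k` for `Λ = diag(λ_1, …, λ_n)` with all `λ_s ≠ 0`. -/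
theorem stmt_1 {R : Type*} [DivisionRing R] {n : ℕ}
    (A : Matrix (Fin 2) (Fin n) R) (lam : Fin n → R) (hlam : ∀ s, lam s ≠ 0)
    (i j k : Fin n) (hij : i ≠ j) (hik : i ≠ k)
    (hA : qpDefined A i j) :
    qpDefined (A * Matrix.diagonal lam) i j ∧
      qp (A * Matrix.diagonal lam) i j k = (lam j)⁻¹ * qp A i j k * lam k := by
  obtain ⟨h1, h2⟩ := hA
  have hB : ∀ r s, (A * Matrix.diagonal lam) r s = A r s * lam s := fun r s =>
    Matrix.mul_diagonal ..
  have key : ∀ s, (A * Matrix.diagonal lam) 0 s -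
      (A * Matrix.diagonal lam) 0 i * ((A * Matrix.diagonal lam) 1 i)⁻¹ *
        (A * Matrix.diagonal lam) 1 s
      = (A 0 s - A 0 i * (A 1 i)⁻¹ * A 1 s) * lam s := by
    intro s
    rw [hB, hB, hB, hB, mul_inv_rev]
    have : A 0 i * lam i * ((lam i)⁻¹ * (A 1 i)⁻¹) = A 0 i * (A 1 i)⁻¹ := by
      rw [mul_assoc, ← mul_assoc (lam i), mul_inv_cancel₀ (hlam i), one_mul]
    rw [this, sub_mul]
    simp [mul_assoc]
  constructor
  · refine ⟨?_, ?_⟩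
    · rw [hB]; exact mul_ne_zero h1 (hlam i)
    · rw [key]; exact mul_ne_zero h2 (hlam j)
  · rw [qp, key, key, mul_inv_rev, qp]
    simp [mul_assoc]
end

section
/- Non-commutative skew symmetry of quasi-Plücker coordinates (Proposition 2.5): let A be a 2×n matrix over R and let i, j, k be pairwise distinct column indices. If the quasi-Plücker coordinates q^k_{ij}(A), q^i_{jk}(A) and q^j_{ki}(A) are all defined, then q^k_{ij}(A) · q^i_{jk}(A) · q^j_{ki}(A) = −1. -/
section Aux

variable {R : Type*} [DivisionRing R]

lemma qp_swap_lemma {a b : R} (ha : a ≠ 0) (hb : b ≠ 0) :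
    b * (b - a)⁻¹ * a = a * (b - a)⁻¹ * b := by
  have h1 : a⁻¹ * (b - a) * b⁻¹ = b⁻¹ * (b - a) * a⁻¹ := by
    rw [mul_sub, sub_mul, mul_sub, sub_mul]
    simp [ha, hb, mul_assoc, mul_inv_cancel₀, inv_mul_cancel₀]
  have h2 := congrArg (·⁻¹) h1
  simpa [mul_inv_rev, ha, hb, mul_assoc] using h2

lemma qp_inner_lemma {a b : R} (ha : a ≠ 0) (hb : b ≠ 0) (hab : b - a ≠ 0) :
    a⁻¹ * (b * ((b - a)⁻¹ * (a * (b⁻¹ * (a - b))))) = -1 := by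
  rw [show a - b = -(b - a) from (neg_sub b a).symm]
  have key : b * ((b - a)⁻¹ * a) = a * ((b - a)⁻¹ * b) := by
    have := qp_swap_lemma ha hb
    rw [mul_assoc, mul_assoc] at this
    exact this
  calc a⁻¹ * (b * ((b - a)⁻¹ * (a * (b⁻¹ * -(b - a)))))
      = a⁻¹ * (b * ((b - a)⁻¹ * a)) * (b⁻¹ * -(b - a)) := by
        simp [mul_assoc]
    _ = a⁻¹ * (a * ((b - a)⁻¹ * b)) * (b⁻¹ * -(b - a)) := by rw [key]
    _ = -1 := by
        rw [← mul_assoc a⁻¹ a, inv_mul_cancel₀ ha, one_mul, mul_assoc,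
          ← mul_assoc b b⁻¹, mul_inv_cancel₀ hb, one_mul, mul_neg,
          inv_mul_cancel₀ hab]

lemma qp_prod_lemma (a b yi yj yk : R) (ha : a ≠ 0) (hb : b ≠ 0) (hab : b - a ≠ 0)
    (hyi : yi ≠ 0) (hyj : yj ≠ 0) (hyk : yk ≠ 0) :
    (a * yi)⁻¹ * (b * yj) * (((b - a) * yj)⁻¹ * (-a * yk)) *
      (((-b) * yk)⁻¹ * ((a - b) * yi)) = -1 := by
  have H := qp_inner_lemma ha hb hab
  calc (a * yi)⁻¹ * (b * yj) * (((b - a) * yj)⁻¹ * (-a * yk)) *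
      (((-b) * yk)⁻¹ * ((a - b) * yi))
      = yi⁻¹ * ((a⁻¹ * (b * ((b - a)⁻¹ * (a * (b⁻¹ * (a - b)))))) * yi) := by
        simp [mul_inv_rev, inv_neg, mul_assoc, hyj, hyk, neg_mul, mul_neg, neg_neg,
          mul_inv_cancel_left₀]
    _ = yi⁻¹ * (-1 * yi) := by rw [H]
    _ = -1 := by simp [hyi]

lemma qp_num_eq {n : ℕ} (A : Matrix (Fin 2) (Fin n) R) (p q : Fin n) (hp : A 1 p ≠ 0) :
    A 0 p - A 0 q * (A 1 q)⁻¹ * A 1 p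
      = (A 0 p * (A 1 p)⁻¹ - A 0 q * (A 1 q)⁻¹) * A 1 p := by
  rw [sub_mul, mul_assoc (A 0 p), inv_mul_cancel₀ hp, mul_one, mul_assoc]

end Aux

/-- Non-commutative skew symmetry: `q^k_{ij}(A) · q^i_{jk}(A) · q^j_{ki}(A) = −1`. -/
theorem stmt_3 {R : Type*} [DivisionRing R] {n : ℕ}
    (A : Matrix (Fin 2) (Fin n) R) (i j k : Fin n)
    (hij : i ≠ j) (hjk : j ≠ k) (hik : i ≠ k)
    (h1 : qpDefined A k i) (h2 : qpDefined A i j) (h3 : qpDefined A j k) :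
    qp A k i j * qp A i j k * qp A j k i = -1 := by
  obtain ⟨hyk, hn1⟩ := h1
  obtain ⟨hyi, hn2⟩ := h2
  obtain ⟨hyj, hn3⟩ := h3
  set gi := A 0 i * (A 1 i)⁻¹ with hgi
  set gj := A 0 j * (A 1 j)⁻¹ with hgj
  set gk := A 0 k * (A 1 k)⁻¹ with hgk
  set a := gi - gk with ha'
  set b := gj - gk with hb'
  have e1 : A 0 i - A 0 k * (A 1 k)⁻¹ * A 1 i = a * A 1 i := qp_num_eq A i k hyi
  have e2 : A 0 j - A 0 k * (A 1 k)⁻¹ * A 1 j = b * A 1 j := qp_num_eq A j k hyj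
  have e3 : A 0 j - A 0 i * (A 1 i)⁻¹ * A 1 j = (b - a) * A 1 j := by
    rw [qp_num_eq A j i hyj]; simp only [ha', hb', hgi, hgj, hgk]; congr 1; abel
  have e4 : A 0 k - A 0 i * (A 1 i)⁻¹ * A 1 k = (-a) * A 1 k := by
    rw [qp_num_eq A k i hyk]; simp only [ha', hb', hgi, hgj, hgk]; congr 1; abel
  have e5 : A 0 k - A 0 j * (A 1 j)⁻¹ * A 1 k = (-b) * A 1 k := by
    rw [qp_num_eq A k j hyk]; simp only [ha', hb', hgi, hgj, hgk]; congr 1; abel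
  have e6 : A 0 i - A 0 j * (A 1 j)⁻¹ * A 1 i = (a - b) * A 1 i := by
    rw [qp_num_eq A i j hyi]; simp only [ha', hb', hgi, hgj, hgk]; congr 1; abel
  have ha : a ≠ 0 := left_ne_zero_of_mul (e1 ▸ hn1)
  have hab : b - a ≠ 0 := left_ne_zero_of_mul (e3 ▸ hn2)
  have hb : b ≠ 0 := by
    have := left_ne_zero_of_mul (e5 ▸ hn3)
    simpa using this
  unfold qp
  rw [e1, e2, e3, e4, e5, e6]
  exact qp_prod_lemma a b (A 1 i) (A 1 j) (A 1 k) ha hb hab hyi hyj hyk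
end

section
/- Non-commutative Plücker identity (Proposition 2.6): let A be a 2×n matrix over R and let i, j, k, l be pairwise distinct column indices. If the quasi-Plücker coordinates q^k_{ij}(A), q^l_{ji}(A), q^k_{il}(A) and q^j_{li}(A) are all defined, then q^k_{ij}(A) · q^l_{ji}(A) + q^k_{il}(A) · q^j_{li}(A) = 1. -/
private lemma rew_aux {R : Type*} [DivisionRing R] (a c b : R) (hb : b ≠ 0) :
    a - c * b = (a * b⁻¹ - c) * b := by
  rw [sub_mul, mul_assoc, inv_mul_cancel₀ hb, mul_one]

private lemma key_aux {R : Type*} [DivisionRing R] (ai bi bj bl hj hk hl : R)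
    (hbj : bj ≠ 0) (hbl : bl ≠ 0) (hu : hj - hl ≠ 0)
    (hx : ai - hk * bi ≠ 0) :
    (ai - hk * bi)⁻¹ * ((hj - hk) * bj) * (((hj - hl) * bj)⁻¹ * (ai - hl * bi)) +
      (ai - hk * bi)⁻¹ * ((hl - hk) * bl) * (((hl - hj) * bl)⁻¹ * (ai - hj * bi)) = 1 := by
  set u := hj - hl with hudef
  have hlj : hl - hj = -u := by rw [hudef]; noncomm_ring
  have e1 : ((hj - hl) * bj)⁻¹ = bj⁻¹ * u⁻¹ := by rw [← hudef]; exact mul_inv_rev _ _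
  have e2 : ((hl - hj) * bl)⁻¹ = bl⁻¹ * -u⁻¹ := by
    rw [hlj, mul_inv_rev, inv_neg]
  rw [e1, e2]
  have T1 : (ai - hk * bi)⁻¹ * ((hj - hk) * bj) * (bj⁻¹ * u⁻¹ * (ai - hl * bi)) =
      (ai - hk * bi)⁻¹ * ((hj - hk) * (u⁻¹ * (ai - hl * bi))) := by
    simp [mul_assoc, mul_inv_cancel_left₀ hbj]
  have T2 : (ai - hk * bi)⁻¹ * ((hl - hk) * bl) * (bl⁻¹ * -u⁻¹ * (ai - hj * bi)) =
      (ai - hk * bi)⁻¹ * ((hl - hk) * (-(u⁻¹ * (ai - hj * bi)))) := by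
    simp [mul_assoc, mul_inv_cancel_left₀ hbl]
  rw [T1, T2, ← mul_add]
  have core : (hj - hk) * (u⁻¹ * (ai - hl * bi)) +
      (hl - hk) * (-(u⁻¹ * (ai - hj * bi))) = ai - hk * bi := by
    have c1 : u⁻¹ * (ai - hl * bi) = u⁻¹ * (ai - hj * bi) + bi := by
      have h : ai - hl * bi = (ai - hj * bi) + u * bi := by rw [hudef]; noncomm_ring
      rw [h, mul_add, inv_mul_cancel_left₀ hu]
    have c2 : (hj - hk) - (hl - hk) = u := by rw [hudef]; noncomm_ring
    calc (hj - hk) * (u⁻¹ * (ai - hl * bi)) + (hl - hk) * (-(u⁻¹ * (ai - hj * bi)))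
        = ((hj - hk) - (hl - hk)) * (u⁻¹ * (ai - hj * bi)) + (hj - hk) * bi := by
          rw [c1]; noncomm_ring
      _ = u * (u⁻¹ * (ai - hj * bi)) + (hj - hk) * bi := by rw [c2]
      _ = (ai - hj * bi) + (hj - hk) * bi := by rw [mul_inv_cancel_left₀ hu]
      _ = ai - hk * bi := by noncomm_ring
  rw [core, inv_mul_cancel₀ hx]

/-- Non-commutative Plücker identity:
`q^k_{ij}(A) · q^l_{ji}(A) + q^k_{il}(A) · q^j_{li}(A) = 1`. -/
theorem stmt_4 {R : Type*} [DivisionRing R] {n : ℕ}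
    (A : Matrix (Fin 2) (Fin n) R) (i j k l : Fin n)
    (hij : i ≠ j) (hik : i ≠ k) (hil : i ≠ l)
    (hjk : j ≠ k) (hjl : j ≠ l) (hkl : k ≠ l)
    (h1 : qpDefined A k i) (h2 : qpDefined A l j) (h3 : qpDefined A j l) :
    qp A k i j * qp A l j i + qp A k i l * qp A j l i = 1 := by
  obtain ⟨hbk, hki⟩ := h1
  obtain ⟨hbl, hlj⟩ := h2
  obtain ⟨hbj, hjl'⟩ := h3
  unfold qp
  rw [rew_aux (A 0 j) (A 0 k * (A 1 k)⁻¹) (A 1 j) hbj,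
      rew_aux (A 0 j) (A 0 l * (A 1 l)⁻¹) (A 1 j) hbj,
      rew_aux (A 0 l) (A 0 k * (A 1 k)⁻¹) (A 1 l) hbl,
      rew_aux (A 0 l) (A 0 j * (A 1 j)⁻¹) (A 1 l) hbl]
  have hu : A 0 j * (A 1 j)⁻¹ - A 0 l * (A 1 l)⁻¹ ≠ 0 := by
    intro h
    apply hlj
    rw [rew_aux (A 0 j) (A 0 l * (A 1 l)⁻¹) (A 1 j) hbj, h, zero_mul]
  exact key_aux (A 0 i) (A 1 i) (A 1 j) (A 1 l)
    (A 0 j * (A 1 j)⁻¹) (A 0 k * (A 1 k)⁻¹) (A 0 l * (A 1 l)⁻¹) hbj hbl hu hki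
end

section
/- Non-commutative Y-system of the leapfrog map (Theorem 3.10): let R be a division ring and a, y : ℤ × ℤ → R doubly indexed families with a_i^j ≠ 0, y_i^j ≠ 0 and 1 + y_i^j ≠ 0 for all i, j, satisfying for all i, j the relations a_{i+1}^j = (y_i^{j−1})⁻¹·a_i^j·y_i^j and a_i^{j+1} = (1 + y_{i−1}^j)⁻¹·a_i^j·(1 + y_i^j). Set b_i^j := a_i^j·y_i^j. Then for all i, j: (b_i^j)⁻¹·(1 + y_{i−1}^j)·(1 + (y_i^j)⁻¹)⁻¹·(y_i^{j−1})⁻¹·b_i^j = (1 + (y_i^j)⁻¹)·y_i^{j+1}·(1 + y_{i+1}^j)⁻¹. -/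
theorem alg_key {R : Type*} [DivisionRing R] (A Y Ym Yp Yd : R)
    (hY : Y ≠ 0) (hY1 : 1 + Y ≠ 0) (hYp : 1 + Yp ≠ 0) :
    (A * Y)⁻¹ * (1 + Ym) * (1 + Y⁻¹)⁻¹ * Yd⁻¹ * (A * Y)
      = (1 + Y⁻¹) * (((1 + Ym)⁻¹ * A * (1 + Y))⁻¹ * Y *
          ((1 + Y)⁻¹ * (Yd⁻¹ * A * Y) * (1 + Yp))) * (1 + Yp)⁻¹ := by
  have hi1 : (1 + Y⁻¹) = Y⁻¹ * (1 + Y) := by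
    rw [mul_add, inv_mul_cancel₀ hY, mul_one, add_comm]
  have hi2 : (1 + Y⁻¹)⁻¹ = (1 + Y)⁻¹ * Y := by
    rw [hi1, mul_inv_rev, inv_inv]
  have hc : Y * (1 + Y)⁻¹ = (1 + Y)⁻¹ * Y :=
    (((Commute.one_right Y).add_right (Commute.refl Y)).inv_right₀).symm.eq.symm
  have hc' : ∀ z : R, Y * ((1 + Y)⁻¹ * z) = (1 + Y)⁻¹ * (Y * z) := by
    intro z; rw [← mul_assoc, hc, mul_assoc]
  rw [hi2, hi1]
  simp [mul_assoc, mul_inv_rev, inv_inv, hc', hY, hY1, hYp,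
    mul_inv_cancel_left₀, inv_mul_cancel_left₀, mul_inv_cancel₀, inv_mul_cancel₀]

/-- Non-commutative Y-system of the leapfrog map: with `b_i^j := a_i^j·y_i^j`, the
leapfrog evolution relations imply
`(b_i^j)⁻¹·(1 + y_{i−1}^j)·(1 + (y_i^j)⁻¹)⁻¹·(y_i^{j−1})⁻¹·b_i^j
  = (1 + (y_i^j)⁻¹)·y_i^{j+1}·(1 + y_{i+1}^j)⁻¹`. -/
theorem stmt_12 {R : Type*} [DivisionRing R] (a y : ℤ → ℤ → R)
    (ha : ∀ i j : ℤ, a i j ≠ 0)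
    (hy : ∀ i j : ℤ, y i j ≠ 0)
    (hy1 : ∀ i j : ℤ, 1 + y i j ≠ 0)
    (h1 : ∀ i j : ℤ, a (i + 1) j = (y i (j - 1))⁻¹ * a i j * y i j)
    (h2 : ∀ i j : ℤ, a i (j + 1) = (1 + y (i - 1) j)⁻¹ * a i j * (1 + y i j)) :
    ∀ i j : ℤ,
      (a i j * y i j)⁻¹ * (1 + y (i - 1) j) * (1 + (y i j)⁻¹)⁻¹ * (y i (j - 1))⁻¹
          * (a i j * y i j)
        = (1 + (y i j)⁻¹) * y i (j + 1) * (1 + y (i + 1) j)⁻¹ := by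
  intro i j
  have eA := h1 i (j + 1)
  rw [show j + 1 - 1 = j by ring] at eA
  have eB := h2 (i + 1) j
  rw [show i + 1 - 1 = i by ring] at eB
  have e4 : y i (j + 1) = (a i (j + 1))⁻¹ * y i j *
      ((1 + y i j)⁻¹ * a (i + 1) j * (1 + y (i + 1) j)) := by
    rw [← eB, eA]
    simp [mul_assoc, mul_inv_cancel_left₀, inv_mul_cancel_left₀, inv_inv,
      ha i (j + 1), hy i j]
  rw [e4, h2 i j, h1 i j]
  exact alg_key (a i j) (y i j) (y (i - 1) j) (y (i + 1) j) (y i (j - 1))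
    (hy i j) (hy1 i j) (hy1 (i + 1) j)
end

section
/- Quasi-determinant formula and bi-orthogonality of non-commutative Laurent bi-orthogonal polynomials (Theorem 4.2): assume T_n^{(0)} is invertible for every n ≥ 1. For n ≥ 1 define P_n(z) := z^n + Σ_{i=0}^{n−1} ξ_i·z^i with the row vector (ξ_0, …, ξ_{n−1}) := −(m(n), m(n−1), …, m(1))·(T_n^{(0)})⁻¹; define Q_n(z) := z^n − Σ_{i=0}^{n−1} (c_i)*·z^i with the column vector (c_0, …, c_{n−1})ᵀ := (T_n^{(0)})⁻¹·(m(−n), m(−n+1), …, m(−1))ᵀ; define H_n := m(0) − (m(n), …, m(1))·(T_n^{(0)})⁻¹·(m(−n), …, m(−1))ᵀ; and set P_0 := 1, Q_0 := 1, H_0 := m(0). Then for all n, m ∈ ℕ: ⟨P_n, Q_m⟩ = H_n if n = m, and ⟨P_n, Q_m⟩ = 0 if n ≠ m. -/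
/-- The `n × n` shifted Toeplitz matrix `T_n^{(k)} = (m(k + i − j))_{i,j=0}^{n−1}`. -/
noncomputable def Tmat {R : Type*} [DivisionRing R] (m : ℤ → R) (k : ℤ) (n : ℕ) :
    Matrix (Fin n) (Fin n) R :=
  Matrix.of fun i j => m (k + (i.val : ℤ) - (j.val : ℤ))

/-- The monic non-commutative Laurent bi-orthogonal polynomial
`P_n(z) = z^n + Σ_{i=0}^{n−1} ξ_i z^i`, where
`(ξ_0, …, ξ_{n−1}) = −(m(n), …, m(1))·(T_n^{(0)})⁻¹`, given by its coefficients. -/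
noncomputable def Pp {R : Type*} [DivisionRing R] (m : ℤ → R) (n : ℕ) : ℤ → R := fun i =>
  if i = (n : ℤ) then 1
  else if hi : 0 ≤ i ∧ i < (n : ℤ) then
    -(∑ j : Fin n, m ((n : ℤ) - (j.val : ℤ)) *
      Ring.inverse (Tmat m 0 n) j ⟨i.toNat, by omega⟩)
  else 0

/-- The monic non-commutative Laurent bi-orthogonal polynomial
`Q_n(z) = z^n − Σ_{i=0}^{n−1} (c_i)* z^i`, where
`(c_0, …, c_{n−1})ᵀ = (T_n^{(0)})⁻¹·(m(−n), …, m(−1))ᵀ`, given by its coefficients;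
`s` is the involution. -/
noncomputable def Qq {R : Type*} [DivisionRing R] (m : ℤ → R) (s : R → R) (n : ℕ) :
    ℤ → R := fun i =>
  if i = (n : ℤ) then 1
  else if hi : 0 ≤ i ∧ i < (n : ℤ) then
    -(s (∑ j : Fin n, Ring.inverse (Tmat m 0 n) ⟨i.toNat, by omega⟩ j *
      m (-(n : ℤ) + (j.val : ℤ))))
  else 0

/-- The normalization factor
`H_n = m(0) − (m(n), …, m(1))·(T_n^{(0)})⁻¹·(m(−n), …, m(−1))ᵀ` (with `H_0 = m(0)`). -/
noncomputable def Hnorm {R : Type*} [DivisionRing R] (m : ℤ → R) (n : ℕ) : R :=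
  m 0 - ∑ j : Fin n, ∑ l : Fin n,
    m ((n : ℤ) - (j.val : ℤ)) * Ring.inverse (Tmat m 0 n) j l * m (-(n : ℤ) + (l.val : ℤ))

/-- The pairing `⟨f, g⟩ = Σ_{i,j} f(i)·m(i−j)·(g(j))*` of Laurent polynomials, viewed as
finitely supported coefficient functions `ℤ → R`. -/
noncomputable def pairing {R : Type*} [DivisionRing R] (m : ℤ → R) (s : R → R)
    (f g : ℤ → R) : R :=
  ∑ᶠ (i : ℤ), ∑ᶠ (j : ℤ), f i * m (i - j) * s (g j)

/-! Write `T = T_n^{(0)}`, `u = (m(n), …, m(1))` and `w = (m(−n), …, m(−1))ᵀ`, so that the lower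
coefficients of `P_n` are `−u T⁻¹` and those of `Q_n` are `−(T⁻¹ w)*`. Pairing `P_n` against the
monomial `z^j` gives `m(n − j) − (u T⁻¹ T)_j = 0` for `j < n` and `m(0) − u T⁻¹ w = H_n` for `j = n`;
dually, pairing `z^i` against `Q_k` gives `m(i − k) − (T T⁻¹ w)_i = 0` for `i < k`. Since `P_n` and
`Q_k` have degrees `n` and `k`, the first fact settles `k ≤ n` and the second `n < k`. -/

open Finset Matrix

section

variable {R : Type*} [DivisionRing R] (m : ℤ → R)

def momentRow (n : ℕ) : Fin n → R := fun j => m ((n : ℤ) - (j.val : ℤ))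

def momentCol (n : ℕ) : Fin n → R := fun l => m (-(n : ℤ) + (l.val : ℤ))

lemma Tmat_zero_apply (n : ℕ) (i j : Fin n) :
    Tmat m 0 n i j = m ((i.val : ℤ) - (j.val : ℤ)) := by
  simp [Tmat]

lemma Pp_natCast_self (n : ℕ) : Pp m n n = 1 := by simp [Pp]

lemma Pp_natCast_of_lt {n i : ℕ} (h : i < n) :
    Pp m n i = -vecMul (momentRow m n) (Ring.inverse (Tmat m 0 n)) ⟨i, h⟩ := by
  simp [Pp, h, h.ne, vecMul, dotProduct, momentRow]

lemma support_Pp_subset (n : ℕ) : Function.support (Pp m n) ⊆ Set.Icc 0 n := by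
  intro i hi
  by_contra h
  exact hi (by rw [Pp, if_neg (by grind), dif_neg (by grind)])

lemma Hnorm_eq (n : ℕ) :
    Hnorm m n = m 0 - momentRow m n ⬝ᵥ (Ring.inverse (Tmat m 0 n) *ᵥ momentCol m n) := by
  simp only [Hnorm, dotProduct, mulVec, mul_sum, mul_assoc, momentRow, momentCol]

variable (s : R → R)

lemma Qq_natCast_self (n : ℕ) : Qq m s n n = 1 := by simp [Qq]

lemma Qq_natCast_of_lt {n i : ℕ} (h : i < n) :
    Qq m s n i = -s ((Ring.inverse (Tmat m 0 n) *ᵥ momentCol m n) ⟨i, h⟩) := by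
  simp [Qq, h, h.ne, mulVec, dotProduct, momentCol]

lemma support_Qq_subset (n : ℕ) : Function.support (Qq m s n) ⊆ Set.Icc 0 n := by
  intro i hi
  by_contra h
  exact hi (by rw [Qq, if_neg (by grind), dif_neg (by grind)])

lemma Icc_subset_map_range (N : ℕ) :
    Set.Icc (0 : ℤ) N ⊆ ((range (N + 1)).map Nat.castEmbedding : Finset ℤ) := by
  rintro i ⟨h0, hN⟩
  simp only [coe_map, coe_range, Set.mem_image, Set.mem_Iio, Nat.castEmbedding_apply]
  exact ⟨i.toNat, by omega, by omega⟩

lemma pairing_eq_sum_range (hs0 : s 0 = 0) {f g : ℤ → R} {N K : ℕ}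
    (hf : Function.support f ⊆ Set.Icc 0 N) (hg : Function.support g ⊆ Set.Icc 0 K) :
    pairing m s f g =
      ∑ i ∈ range (N + 1), ∑ j ∈ range (K + 1), f i * m (i - j) * s (g j) := by
  have inner (i : ℤ) :
      ∑ᶠ j : ℤ, f i * m (i - j) * s (g j) =
        ∑ j ∈ range (K + 1), f i * m (i - j) * s (g (j : ℤ)) := by
    rw [finsum_eq_sum_of_support_subset _ (s := (range (K + 1)).map Nat.castEmbedding), sum_map]
    · rfl
    · refine subset_trans (fun j hj => hg fun hgj => hj ?_) (Icc_subset_map_range K)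
      simp [hgj, hs0]
  rw [pairing, finsum_congr inner,
    finsum_eq_sum_of_support_subset _ (s := (range (N + 1)).map Nat.castEmbedding), sum_map]
  · rfl
  · refine subset_trans (fun i hi => hf fun hfi => hi ?_) (Icc_subset_map_range N)
    simp [hfi]

lemma sum_Pp_mul_moment (n : ℕ) (hT : 1 ≤ n → IsUnit (Tmat m 0 n)) {j : ℕ} (hj : j ≤ n) :
    ∑ i ∈ range (n + 1), Pp m n i * m ((i : ℤ) - j) = if j = n then Hnorm m n else 0 := by
  set ξ := vecMul (momentRow m n) (Ring.inverse (Tmat m 0 n))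
  have lower : ∑ i ∈ range n, Pp m n i * m ((i : ℤ) - j) =
      -∑ i : Fin n, ξ i * m ((i.val : ℤ) - j) := by
    rw [← Fin.sum_univ_eq_sum_range, ← sum_neg_distrib]
    exact sum_congr rfl fun i _ => by rw [Pp_natCast_of_lt m i.isLt, neg_mul]
  rw [sum_range_succ, lower, Pp_natCast_self, one_mul]
  rcases hj.lt_or_eq with hjn | rfl
  · have hT_row : ∑ i : Fin n, ξ i * m ((i.val : ℤ) - j) = m ((n : ℤ) - j) := by
      calc ∑ i : Fin n, ξ i * m ((i.val : ℤ) - j)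
          = vecMul ξ (Tmat m 0 n) ⟨j, hjn⟩ := by simp only [vecMul, dotProduct, Tmat_zero_apply]
        _ = m ((n : ℤ) - j) := by
          rw [vecMul_vecMul, Ring.inverse_mul_cancel _ (hT (by omega)), vecMul_one]; rfl
    rw [hT_row, if_neg hjn.ne, neg_add_cancel]
  · have hH : ∑ i : Fin j, ξ i * m ((i.val : ℤ) - j) =
        momentRow m j ⬝ᵥ (Ring.inverse (Tmat m 0 j) *ᵥ momentCol m j) := by
      rw [dotProduct_mulVec]
      exact sum_congr rfl fun i _ => by rw [momentCol, neg_add_eq_sub]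
    rw [hH, if_pos rfl, Hnorm_eq, sub_self, neg_add_eq_sub]

lemma sum_moment_mul_Qq (hs_add : ∀ a b : R, s (a + b) = s a + s b)
    (hs_invol : ∀ a : R, s (s a) = a) (hs_one : s 1 = 1)
    {k : ℕ} (hT : IsUnit (Tmat m 0 k)) {i : ℕ} (hik : i < k) :
    ∑ j ∈ range (k + 1), m ((i : ℤ) - j) * s (Qq m s k j) = 0 := by
  have hs_neg (a : R) : s (-a) = -s a := map_neg (AddMonoidHom.mk' s hs_add) a
  set c := Ring.inverse (Tmat m 0 k) *ᵥ momentCol m k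
  have lower : ∑ j ∈ range k, m ((i : ℤ) - j) * s (Qq m s k j) =
      -∑ j : Fin k, m ((i : ℤ) - j.val) * c j := by
    rw [← Fin.sum_univ_eq_sum_range, ← sum_neg_distrib]
    exact sum_congr rfl fun j _ => by rw [Qq_natCast_of_lt m s j.isLt, hs_neg, hs_invol, mul_neg]
  have hT_col : ∑ j : Fin k, m ((i : ℤ) - j.val) * c j = m ((i : ℤ) - k) := by
    calc ∑ j : Fin k, m ((i : ℤ) - j.val) * c j
        = (Tmat m 0 k *ᵥ c) ⟨i, hik⟩ := by simp only [mulVec, dotProduct, Tmat_zero_apply]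
      _ = m ((i : ℤ) - k) := by
        rw [mulVec_mulVec, Ring.mul_inverse_cancel _ hT, one_mulVec, momentCol, neg_add_eq_sub]
  rw [sum_range_succ, lower, hT_col, Qq_natCast_self, hs_one, mul_one, neg_add_cancel]

end

theorem stmt_13_general {R : Type*} [DivisionRing R] (m : ℤ → R) (s : R → R)
    (hs_add : ∀ a b : R, s (a + b) = s a + s b)
    (hs_invol : ∀ a : R, s (s a) = a)
    (hs_one : s 1 = 1)
    (hT : ∀ n : ℕ, 1 ≤ n → IsUnit (Tmat m 0 n)) :
    ∀ n k : ℕ, pairing m s (Pp m n) (Qq m s k) = if n = k then Hnorm m n else 0 := by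
  intro n k
  rw [pairing_eq_sum_range m s (map_zero (AddMonoidHom.mk' s hs_add))
    (support_Pp_subset m n) (support_Qq_subset m s k)]
  rcases lt_or_ge n k with hnk | hkn
  · rw [if_neg hnk.ne]
    refine sum_eq_zero fun i hi => ?_
    simp_rw [mul_assoc]
    rw [← mul_sum, sum_moment_mul_Qq m s hs_add hs_invol hs_one (hT k (by omega))
      (by grind), mul_zero]
  · rw [sum_comm]
    calc ∑ j ∈ range (k + 1), ∑ i ∈ range (n + 1), Pp m n i * m ((i : ℤ) - j) * s (Qq m s k j)
        = ∑ j ∈ range (k + 1), if j = n then Hnorm m n * s (Qq m s k j) else 0 :=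
          sum_congr rfl fun j hj => by
            rw [← sum_mul, sum_Pp_mul_moment m n (hT n) (by grind), ite_mul, zero_mul]
      _ = if n = k then Hnorm m n else 0 := by
        rcases hkn.eq_or_lt with rfl | hkn
        · rw [sum_ite_eq', if_pos (self_mem_range_succ _), Qq_natCast_self, hs_one, mul_one,
            if_pos rfl]
        · rw [sum_ite_eq', if_neg (by simpa using hkn.not_ge), if_neg hkn.ne']

/-- Quasi-determinant formula and bi-orthogonality of non-commutative Laurent
bi-orthogonal polynomials: `⟨P_n, Q_m⟩ = H_n δ_{n,m}`. -/
theorem stmt_13 {R : Type*} [DivisionRing R] (m : ℤ → R) (s : R → R)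
    (hs_add : ∀ a b : R, s (a + b) = s a + s b)
    (hs_mul : ∀ a b : R, s (a * b) = s b * s a)
    (hs_invol : ∀ a : R, s (s a) = a)
    (hs_one : s 1 = 1)
    (hT : ∀ n : ℕ, 1 ≤ n → IsUnit (Tmat m 0 n)) :
    ∀ n k : ℕ, pairing m s (Pp m n) (Qq m s k) = if n = k then Hnorm m n else 0 :=
  stmt_13_general m s hs_add hs_invol hs_one hT
end

section
/- Christoffel transformation for non-commutative Laurent bi-orthogonal polynomials (Proposition 4.4): for every k ∈ ℤ and n ≥ 0, assuming all Toeplitz matrices T and all quasi-determinants G occurring below are invertible (resp. nonzero), one has the equality of Laurent polynomials (Q_{n+1}^{(k)})* = z^{−1}·(Q_n^{(k)})* − (Q_n^{(k+1)})*·φ_n^{(k)}, i.e. the coefficients of each power z^{−r} on the two sides coincide. -/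
/-- The Laurent polynomial `(Q_n^{(k)})*(z) = z^{−n} − Σ_{i=0}^{n−1} c_i z^{−i}`, where
`(c_0, …, c_{n−1})ᵀ = (T_n^{(k)})⁻¹·(m(k−n), …, m(k−1))ᵀ`, given as the coefficient
function `ℤ → R` (the value at `e` is the coefficient of `z^e`). -/
noncomputable def Qs {R : Type*} [DivisionRing R] (m : ℤ → R) (k : ℤ) (n : ℕ) :
    ℤ → R := fun e =>
  if e = -(n : ℤ) then 1
  else if he : -(n : ℤ) < e ∧ e ≤ 0 then
    -(∑ j : Fin n, Ring.inverse (Tmat m k n) ⟨(-e).toNat, by omega⟩ j *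
      m (k - (n : ℤ) + (j.val : ℤ)))
  else 0

/-- The quasi-determinant
`H_n^{(k)} = m(k) − (m(k+n), …, m(k+1))·(T_n^{(k)})⁻¹·(m(k−n), …, m(k−1))ᵀ`
(with `H_0^{(k)} = m(k)`). -/
noncomputable def Hq {R : Type*} [DivisionRing R] (m : ℤ → R) (n : ℕ) (k : ℤ) : R :=
  m k - ∑ j : Fin n, ∑ l : Fin n,
    m (k + (n : ℤ) - (j.val : ℤ)) * Ring.inverse (Tmat m k n) j l *
      m (k - (n : ℤ) + (l.val : ℤ))

/-- The quasi-determinant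
`G_n^{(k)} = m(k−n) − (m(k), …, m(k−n+1))·(T_n^{(k+1)})⁻¹·(m(k+1−n), …, m(k))ᵀ`
(with `G_0^{(k)} = m(k)`). -/
noncomputable def Gq {R : Type*} [DivisionRing R] (m : ℤ → R) (n : ℕ) (k : ℤ) : R :=
  m (k - (n : ℤ)) - ∑ j : Fin n, ∑ l : Fin n,
    m (k - (j.val : ℤ)) * Ring.inverse (Tmat m (k + 1) n) j l *
      m (k + 1 - (n : ℤ) + (l.val : ℤ))

/-- `ψ_n^{(k)} = (H_n^{(k)})⁻¹·H_n^{(k−1)}`. -/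
noncomputable def psi {R : Type*} [DivisionRing R] (m : ℤ → R) (n : ℕ) (k : ℤ) : R :=
  (Hq m n k)⁻¹ * Hq m n (k - 1)

/-- `φ_n^{(k)} = (G_n^{(k)})⁻¹·G_n^{(k−1)}`. -/
noncomputable def phi {R : Type*} [DivisionRing R] (m : ℤ → R) (n : ℕ) (k : ℤ) : R :=
  (Gq m n k)⁻¹ * Gq m n (k - 1)

section aux
variable {R : Type*} [DivisionRing R]

lemma Qs_at_neg (m : ℤ → R) (k : ℤ) (n : ℕ) (i : ℕ) (hi : i < n) :
    Qs m k n (-(i : ℤ)) =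
      -(∑ j : Fin n, Ring.inverse (Tmat m k n) ⟨i, hi⟩ j * m (k - (n : ℤ) + (j.val : ℤ))) := by
  have h3 : ¬(-(i:ℤ) = -(n:ℤ)) := by omega
  have h4 : -(n:ℤ) < -(i:ℤ) ∧ -(i:ℤ) ≤ 0 := by
    constructor <;> omega
  simp only [Qs, if_neg h3, dif_pos h4]
  have : (⟨(- -(i:ℤ)).toNat, by omega⟩ : Fin n) = ⟨i, hi⟩ := by
    ext; simp
  rw [this]

lemma Qs_at_last (m : ℤ → R) (k : ℤ) (n : ℕ) : Qs m k n (-(n:ℤ)) = 1 := by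
  simp [Qs]

lemma Qs_eq_zero (m : ℤ → R) (k : ℤ) (n : ℕ) (e : ℤ) (h : e < -(n:ℤ) ∨ 0 < e) :
    Qs m k n e = 0 := by
  have h3 : ¬(e = -(n:ℤ)) := by omega
  have h4 : ¬(-(n:ℤ) < e ∧ e ≤ 0) := by omega
  simp only [Qs, if_neg h3, dif_neg h4]
end aux

section aux2
variable {R : Type*} [DivisionRing R]

lemma sum_formula (m : ℤ → R) (κ s : ℤ) (n : ℕ) :
    ∑ j : Fin (n+1), m (s - (j.val : ℤ)) * Qs m κ n (-(j.val : ℤ)) =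
      m (s - (n:ℤ)) - ∑ j : Fin n, ∑ l : Fin n,
        m (s - (j.val:ℤ)) * Ring.inverse (Tmat m κ n) j l * m (κ - (n:ℤ) + (l.val:ℤ)) := by
  rw [Fin.sum_univ_castSucc]
  have h1 : ∀ j : Fin n, Qs m κ n (-((j.val : ℕ) : ℤ)) =
      -(∑ l : Fin n, Ring.inverse (Tmat m κ n) j l * m (κ - (n : ℤ) + (l.val : ℤ))) := by
    intro j
    rw [Qs_at_neg m κ n j.val j.isLt, Fin.eta]
  simp only [Fin.coe_castSucc, Fin.val_last, Qs_at_last, mul_one]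
  simp only [h1, mul_neg, Finset.mul_sum, ← mul_assoc, Finset.sum_neg_distrib]
  rw [neg_add_eq_sub]

lemma orth (m : ℤ → R) (κ : ℤ) (n : ℕ) (hT : IsUnit (Tmat m κ n)) (t : ℕ) (ht : t < n) :
    ∑ j : Fin (n+1), m (κ + (t:ℤ) - (j.val : ℤ)) * Qs m κ n (-(j.val : ℤ)) = 0 := by
  rw [sum_formula]
  have key : ∑ j : Fin n, ∑ l : Fin n,
      m (κ + (t:ℤ) - (j.val:ℤ)) * Ring.inverse (Tmat m κ n) j l * m (κ - (n:ℤ) + (l.val:ℤ))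
      = m (κ - (n:ℤ) + (t:ℤ)) := by
    rw [Finset.sum_comm]
    have h2 : ∀ l : Fin n, ∑ j : Fin n,
        m (κ + (t:ℤ) - (j.val:ℤ)) * Ring.inverse (Tmat m κ n) j l * m (κ - (n:ℤ) + (l.val:ℤ))
        = (Tmat m κ n * Ring.inverse (Tmat m κ n)) ⟨t, ht⟩ l * m (κ - (n:ℤ) + (l.val:ℤ)) := by
      intro l
      rw [Matrix.mul_apply, Finset.sum_mul]
      rfl
    simp only [h2, Ring.mul_inverse_cancel _ hT, Matrix.one_apply]
    rw [Finset.sum_eq_single (⟨t, ht⟩ : Fin n)]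
    · simp
    · intro b _ hb
      simp [Ne.symm hb]
    · simp
  rw [key]
  have : κ + (t:ℤ) - (n:ℤ) = κ - (n:ℤ) + (t:ℤ) := by ring
  rw [this, sub_self]
end aux2

section aux3
variable {R : Type*} [DivisionRing R]

lemma sumG (m : ℤ → R) (κ : ℤ) (n : ℕ) :
    ∑ j : Fin (n+1), m (κ - 1 - (j.val : ℤ)) * Qs m κ n (-(j.val : ℤ)) = Gq m n (κ - 1) := by
  rw [sum_formula]
  unfold Gq
  have hκ : κ - 1 + 1 = κ := by ring
  rw [hκ]
end aux3

section aux4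
variable {R : Type*} [DivisionRing R]

lemma fullrow (m : ℤ → R) (k : ℤ) (n : ℕ) (hT2 : IsUnit (Tmat m k n))
    (hT3 : IsUnit (Tmat m (k + 1) n)) (hG1 : Gq m n k ≠ 0) (t : ℕ) (ht : t ≤ n) :
    ∑ j : Fin (n+2), m (k + (t:ℤ) - (j.val:ℤ)) *
      (Qs m k n (1 - (j.val:ℤ)) - Qs m (k+1) n (-(j.val:ℤ)) * phi m n k) = 0 := by
  have hS1 : ∑ j : Fin (n+2), m (k + (t:ℤ) - (j.val:ℤ)) * Qs m k n (1 - (j.val:ℤ))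
      = ∑ j : Fin (n+1), m (k + (t:ℤ) - 1 - (j.val:ℤ)) * Qs m k n (-(j.val:ℤ)) := by
    rw [Fin.sum_univ_succ]
    have h0 : Qs m k n (1 - (((0 : Fin (n+2)).val : ℕ) : ℤ)) = 0 := by
      apply Qs_eq_zero; right; simp
    rw [h0, mul_zero, zero_add]
    apply Finset.sum_congr rfl
    intro j _
    have h1 : (((j.succ : Fin (n+2)).val : ℕ) : ℤ) = (j.val : ℤ) + 1 := by
      simp [Fin.val_succ]
    rw [h1]
    congr 2
    · ring
    · ring
  have hS2 : ∑ j : Fin (n+2), m (k + (t:ℤ) - (j.val:ℤ)) * Qs m (k+1) n (-(j.val:ℤ))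
      = ∑ j : Fin (n+1), m (k + (t:ℤ) - (j.val:ℤ)) * Qs m (k+1) n (-(j.val:ℤ)) := by
    rw [Fin.sum_univ_castSucc]
    have hlast : Qs m (k+1) n (-(((Fin.last (n+1)).val : ℕ) : ℤ)) = 0 := by
      apply Qs_eq_zero; left; simp [Fin.val_last]
    rw [hlast, mul_zero, add_zero]
    apply Finset.sum_congr rfl
    intro j _
    rw [Fin.coe_castSucc]
  simp only [mul_sub, ← mul_assoc]
  rw [Finset.sum_sub_distrib, ← Finset.sum_mul, hS1, hS2]
  rcases Nat.eq_zero_or_pos t with h | h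
  · subst h
    have e1 : ∑ j : Fin (n+1), m (k + ((0:ℕ):ℤ) - 1 - (j.val:ℤ)) * Qs m k n (-(j.val:ℤ))
        = Gq m n (k-1) := by
      rw [← sumG m k n]
      apply Finset.sum_congr rfl
      intro j _
      congr 2
      ring
    have e2 : ∑ j : Fin (n+1), m (k + ((0:ℕ):ℤ) - (j.val:ℤ)) * Qs m (k+1) n (-(j.val:ℤ))
        = Gq m n k := by
      rw [show Gq m n k = Gq m n ((k+1)-1) by norm_num, ← sumG m (k+1) n]
      apply Finset.sum_congr rfl
      intro j _
      congr 2
      ring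
    rw [e1, e2]
    unfold phi
    rw [mul_inv_cancel_left₀ hG1, sub_self]
  · have e1 : ∑ j : Fin (n+1), m (k + (t:ℤ) - 1 - (j.val:ℤ)) * Qs m k n (-(j.val:ℤ)) = 0 := by
      rw [← orth m k n hT2 (t-1) (by omega)]
      apply Finset.sum_congr rfl
      intro j _
      congr 2
      push_cast [Nat.cast_sub h]
      ring
    have e2 : ∑ j : Fin (n+1), m (k + (t:ℤ) - (j.val:ℤ)) * Qs m (k+1) n (-(j.val:ℤ)) = 0 := by
      rw [← orth m (k+1) n hT3 (t-1) (by omega)]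
      apply Finset.sum_congr rfl
      intro j _
      congr 2
      push_cast [Nat.cast_sub h]
      ring
    rw [e1, e2, zero_mul, sub_self]
end aux4


/-- Christoffel transformation for non-commutative Laurent bi-orthogonal polynomials:
`(Q_{n+1}^{(k)})* = z^{−1}·(Q_n^{(k)})* − (Q_n^{(k+1)})*·φ_n^{(k)}`, coefficientwise. -/
theorem stmt_14 {R : Type*} [DivisionRing R] (m : ℤ → R) (k : ℤ) (n : ℕ)
    (hT1 : IsUnit (Tmat m k (n + 1)))
    (hT2 : IsUnit (Tmat m k n))
    (hT3 : IsUnit (Tmat m (k + 1) n))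
    (hG1 : Gq m n k ≠ 0)
    (hG2 : Gq m n (k - 1) ≠ 0) :
    ∀ r : ℤ, Qs m k (n + 1) r = Qs m k n (r + 1) - Qs m (k + 1) n r * phi m n k := by
  have hrow : (Tmat m k (n+1)).mulVec
      (fun j : Fin (n+1) => Qs m (k+1) n (-(j.val:ℤ)) * phi m n k - Qs m k n (1 - (j.val:ℤ)))
      = fun j : Fin (n+1) => m (k - ((n+1:ℕ):ℤ) + (j.val:ℤ)) := by
    funext i
    have hfull := fullrow m k n hT2 hT3 hG1 i.val (by omega)
    rw [Fin.sum_univ_castSucc] at hfull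
    simp only [Fin.val_last, Fin.coe_castSucc] at hfull
    have hq1 : Qs m k n (1 - ((n+1:ℕ):ℤ)) = 1 := by
      rw [show (1 - ((n+1:ℕ):ℤ)) = -(n:ℤ) by push_cast; ring, Qs_at_last]
    have hq2 : Qs m (k+1) n (-((n+1:ℕ):ℤ)) = 0 := by
      apply Qs_eq_zero; left; push_cast; omega
    rw [hq1, hq2, zero_mul, sub_zero, mul_one] at hfull
    have hS := eq_neg_of_add_eq_zero_left hfull
    show ∑ j : Fin (n+1), Tmat m k (n+1) i j *
        (Qs m (k+1) n (-(j.val:ℤ)) * phi m n k - Qs m k n (1 - (j.val:ℤ)))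
      = m (k - ((n+1:ℕ):ℤ) + (i.val:ℤ))
    have step : ∑ j : Fin (n+1), Tmat m k (n+1) i j *
        (Qs m (k+1) n (-(j.val:ℤ)) * phi m n k - Qs m k n (1 - (j.val:ℤ)))
        = -∑ j : Fin (n+1), m (k + (i.val:ℤ) - (j.val:ℤ)) *
            (Qs m k n (1 - (j.val:ℤ)) - Qs m (k+1) n (-(j.val:ℤ)) * phi m n k) := by
      rw [← Finset.sum_neg_distrib]
      apply Finset.sum_congr rfl
      intro j _
      rw [← mul_neg, neg_sub]
      rfl
    rw [step, hS, neg_neg]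
    congr 1
    push_cast
    ring
  have hd : (fun j : Fin (n+1) => Qs m (k+1) n (-(j.val:ℤ)) * phi m n k - Qs m k n (1 - (j.val:ℤ)))
      = (Ring.inverse (Tmat m k (n+1))).mulVec
          (fun j : Fin (n+1) => m (k - ((n+1:ℕ):ℤ) + (j.val:ℤ))) := by
    rw [← hrow, Matrix.mulVec_mulVec, Ring.inverse_mul_cancel _ hT1, Matrix.one_mulVec]
  intro r
  by_cases hr1 : r = -((n+1:ℕ):ℤ)
  · subst hr1
    have l1 : Qs m k (n+1) (-((n+1:ℕ):ℤ)) = 1 := Qs_at_last m k (n+1)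
    have l2 : Qs m k n (-((n+1:ℕ):ℤ) + 1) = 1 := by
      rw [show (-((n+1:ℕ):ℤ) + 1) = -(n:ℤ) by push_cast; ring, Qs_at_last]
    have l3 : Qs m (k+1) n (-((n+1:ℕ):ℤ)) = 0 := by
      apply Qs_eq_zero; left; push_cast; omega
    rw [l1, l2, l3, zero_mul, sub_zero]
  · by_cases hr2 : -((n+1:ℕ):ℤ) < r ∧ r ≤ 0
    · -- main range
      have hi : ((-r).toNat : ℤ) = -r := Int.toNat_of_nonneg (by omega)
      have hilt : (-r).toNat < n + 1 := by omega
      have hre : r = -(((-r).toNat : ℕ) : ℤ) := by omega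
      rw [hre, Qs_at_neg m k (n+1) (-r).toNat hilt]
      have := congrFun hd ⟨(-r).toNat, hilt⟩
      simp only [Matrix.mulVec, dotProduct] at this
      have ha : (1 : ℤ) - (((-r).toNat : ℕ) : ℤ) = -(((-r).toNat : ℕ) : ℤ) + 1 := by ring
      rw [ha] at this
      rw [← this, neg_sub]
    · -- outside range
      have l1 : Qs m k (n+1) r = 0 := by
        apply Qs_eq_zero; push_cast; omega
      have l2 : Qs m k n (r+1) = 0 := by
        apply Qs_eq_zero; omega
      have l3 : Qs m (k+1) n r = 0 := by
        apply Qs_eq_zero; omega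
      rw [l1, l2, l3, zero_mul, sub_zero]
end

section
/- Geronimus transformation for non-commutative Laurent bi-orthogonal polynomials (Proposition 4.5): for every k ∈ ℤ and n ≥ 0, assuming all Toeplitz matrices T and all quasi-determinants H occurring below are invertible (resp. nonzero), one has the equality of Laurent polynomials z^{−1}·(Q_n^{(k−1)})* = (Q_{n+1}^{(k)})* + (Q_n^{(k)})*·ψ_n^{(k)}, i.e. the coefficients of each power z^{−r} on the two sides coincide. -/
section aux
variable {R : Type*} [DivisionRing R] (m : ℤ → R)

lemma Qs_top (k : ℤ) (n : ℕ) : Qs m k n (-(n:ℤ)) = 1 := by simp [Qs]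

lemma Qs_out (k : ℤ) (n : ℕ) (e : ℤ) (h : e < -(n:ℤ) ∨ 0 < e) : Qs m k n e = 0 := by
  unfold Qs
  rcases h with h | h
  · rw [if_neg (by omega), dif_neg (by omega)]
  · rw [if_neg (by omega), dif_neg (by omega)]

lemma Qs_mid (k : ℤ) (n : ℕ) (j : Fin n) :
    Qs m k n (-((j:ℕ):ℤ)) = -(∑ l : Fin n, Ring.inverse (Tmat m k n) j l *
      m (k - (n:ℤ) + ((l:ℕ):ℤ))) := by
  unfold Qs
  have hj : ((j:ℕ):ℤ) < n := by exact_mod_cast j.isLt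
  rw [if_neg (by omega), dif_pos ⟨by omega, by omega⟩]
  simp only [neg_neg, Int.toNat_natCast, Fin.eta]

lemma ortho (k : ℤ) (n : ℕ) (hT : IsUnit (Tmat m k n)) (i : Fin n) :
    ∑ j : Fin (n+1), m (k + ((i:ℕ):ℤ) - ((j:ℕ):ℤ)) * Qs m k n (-((j:ℕ):ℤ)) = 0 := by
  have hinv : Tmat m k n * Ring.inverse (Tmat m k n) = 1 := Ring.mul_inverse_cancel _ hT
  rw [Fin.sum_univ_castSucc]
  simp only [Fin.coe_castSucc, Fin.val_last]
  rw [Qs_top]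
  have key : ∑ j : Fin n, m (k + ((i:ℕ):ℤ) - ((j:ℕ):ℤ)) * Qs m k n (-((j:ℕ):ℤ))
      = -(m (k + ((i:ℕ):ℤ) - (n:ℤ))) := by
    calc ∑ j : Fin n, m (k + ((i:ℕ):ℤ) - ((j:ℕ):ℤ)) * Qs m k n (-((j:ℕ):ℤ))
        = ∑ j : Fin n, -(∑ l : Fin n, m (k + ((i:ℕ):ℤ) - ((j:ℕ):ℤ)) *
            (Ring.inverse (Tmat m k n) j l * m (k - (n:ℤ) + ((l:ℕ):ℤ)))) := by
          refine Finset.sum_congr rfl fun j _ => ?_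
          rw [Qs_mid, mul_neg, Finset.mul_sum]
      _ = -(∑ l : Fin n, (∑ j : Fin n, Tmat m k n i j * Ring.inverse (Tmat m k n) j l) *
            m (k - (n:ℤ) + ((l:ℕ):ℤ))) := by
          rw [Finset.sum_neg_distrib]
          congr 1
          rw [Finset.sum_comm]
          refine Finset.sum_congr rfl fun l _ => ?_
          rw [Finset.sum_mul]
          refine Finset.sum_congr rfl fun j _ => ?_
          rw [mul_assoc]
          rfl
      _ = -(∑ l : Fin n, (1 : Matrix (Fin n) (Fin n) R) i l * m (k - (n:ℤ) + ((l:ℕ):ℤ))) := by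
          simp only [← Matrix.mul_apply, hinv]
      _ = -(m (k + ((i:ℕ):ℤ) - (n:ℤ))) := by
          simp [Matrix.one_apply]
          congr 1
          omega
  rw [key]
  simp

lemma Hq_sum (k : ℤ) (n : ℕ) :
    Hq m n k = ∑ j : Fin (n+1), m (k + (n:ℤ) - ((j:ℕ):ℤ)) * Qs m k n (-((j:ℕ):ℤ)) := by
  rw [Fin.sum_univ_castSucc]
  simp only [Fin.coe_castSucc, Fin.val_last]
  rw [Qs_top]
  have : ∀ j : Fin n, m (k + (n:ℤ) - ((j:ℕ):ℤ)) * Qs m k n (-((j:ℕ):ℤ))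
      = -(∑ l : Fin n, m (k + (n:ℤ) - ((j:ℕ):ℤ)) * Ring.inverse (Tmat m k n) j l *
          m (k - (n:ℤ) + ((l:ℕ):ℤ))) := by
    intro j
    rw [Qs_mid, mul_neg, Finset.mul_sum]
    congr 1
    exact Finset.sum_congr rfl fun l _ => (mul_assoc _ _ _).symm
  rw [Finset.sum_congr rfl fun j _ => this j, Finset.sum_neg_distrib]
  unfold Hq
  rw [show k + (n:ℤ) - (n:ℤ) = k by ring]
  rw [mul_one, sub_eq_neg_add]

end aux

section aux2
variable {R : Type*} [DivisionRing R] (m : ℤ → R)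

lemma unique (k : ℤ) (n : ℕ) (hT : IsUnit (Tmat m k n)) (d : Fin (n+1) → R)
    (hd : ∀ i : Fin n, ∑ j : Fin (n+1), m (k + ((i:ℕ):ℤ) - ((j:ℕ):ℤ)) * d j = 0) :
    ∀ j : Fin (n+1), d j = Qs m k n (-((j:ℕ):ℤ)) * d (Fin.last n) := by
  have hinv : Ring.inverse (Tmat m k n) * Tmat m k n = 1 := Ring.inverse_mul_cancel _ hT
  have hmv : (Tmat m k n).mulVec (fun j => d j.castSucc)
      = fun i : Fin n => -(m (k + ((i:ℕ):ℤ) - (n:ℤ)) * d (Fin.last n)) := by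
    funext i
    have h := hd i
    rw [Fin.sum_univ_castSucc] at h
    simp only [Fin.coe_castSucc, Fin.val_last] at h
    have h2 : ∑ j : Fin n, m (k + ((i:ℕ):ℤ) - ((j:ℕ):ℤ)) * d j.castSucc
        = -(m (k + ((i:ℕ):ℤ) - (n:ℤ)) * d (Fin.last n)) := by
      rw [eq_neg_iff_add_eq_zero]
      exact h
    rw [← h2]
    rfl
  have hw : (fun j => d j.castSucc)
      = (Ring.inverse (Tmat m k n)).mulVec
          (fun i : Fin n => -(m (k + ((i:ℕ):ℤ) - (n:ℤ)) * d (Fin.last n))) := by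
    rw [← hmv, Matrix.mulVec_mulVec, hinv, Matrix.one_mulVec]
  intro j
  rcases Fin.eq_castSucc_or_eq_last j with ⟨c, rfl⟩ | rfl
  · have : d c.castSucc = ∑ l : Fin n, Ring.inverse (Tmat m k n) c l *
        (-(m (k + ((l:ℕ):ℤ) - (n:ℤ)) * d (Fin.last n))) := by
      conv_lhs => rw [show d c.castSucc = (fun j => d j.castSucc) c from rfl, hw]
      rfl
    rw [this]
    simp only [Fin.coe_castSucc]
    rw [Qs_mid, neg_mul, Finset.sum_mul, ← Finset.sum_neg_distrib]
    refine Finset.sum_congr rfl fun l _ => ?_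
    rw [show k + ((l:ℕ):ℤ) - (n:ℤ) = k - (n:ℤ) + ((l:ℕ):ℤ) by ring, mul_neg, mul_assoc]
  · simp only [Fin.val_last]
    rw [Qs_top, one_mul]

end aux2

/-- Geronimus transformation for non-commutative Laurent bi-orthogonal polynomials:
`z^{−1}·(Q_n^{(k−1)})* = (Q_{n+1}^{(k)})* + (Q_n^{(k)})*·ψ_n^{(k)}`, coefficientwise. -/
theorem stmt_15 {R : Type*} [DivisionRing R] (m : ℤ → R) (k : ℤ) (n : ℕ)
    (hT1 : IsUnit (Tmat m (k - 1) n))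
    (hT2 : IsUnit (Tmat m k (n + 1)))
    (hT3 : IsUnit (Tmat m k n))
    (hH1 : Hq m n k ≠ 0)
    (hH2 : Hq m n (k - 1) ≠ 0) :
    ∀ r : ℤ, Qs m (k - 1) n (r + 1) = Qs m k (n + 1) r + Qs m k n r * psi m n k := by
  -- the difference function
  set D : Fin (n+1) → R :=
    fun j => Qs m (k-1) n (-((j:ℕ):ℤ) + 1) - Qs m k (n+1) (-((j:ℕ):ℤ)) with hDdef
  -- orthogonality of D
  have hD : ∀ i : Fin n, ∑ j : Fin (n+1), m (k + ((i:ℕ):ℤ) - ((j:ℕ):ℤ)) * D j = 0 := by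
    intro i
    have hsplit : ∑ j : Fin (n+1), m (k + ((i:ℕ):ℤ) - ((j:ℕ):ℤ)) * D j
        = (∑ j : Fin (n+1), m (k + ((i:ℕ):ℤ) - ((j:ℕ):ℤ)) * Qs m (k-1) n (-((j:ℕ):ℤ) + 1))
        - (∑ j : Fin (n+1), m (k + ((i:ℕ):ℤ) - ((j:ℕ):ℤ)) * Qs m k (n+1) (-((j:ℕ):ℤ))) := by
      rw [← Finset.sum_sub_distrib]
      exact Finset.sum_congr rfl fun j _ => by rw [hDdef, mul_sub]
    -- first sum
    have hA : ∑ j : Fin (n+1), m (k + ((i:ℕ):ℤ) - ((j:ℕ):ℤ)) * Qs m (k-1) n (-((j:ℕ):ℤ) + 1)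
        = -(m (k - 1 + ((i:ℕ):ℤ) - (n:ℤ))) := by
      rw [Fin.sum_univ_succ]
      have h0 : Qs m (k-1) n (-(((0 : Fin (n+1)):ℕ):ℤ) + 1) = 0 := by
        apply Qs_out; right; simp
      rw [h0, mul_zero, zero_add]
      have hterm : ∀ j : Fin n,
          m (k + ((i:ℕ):ℤ) - (((j.succ : Fin (n+1)):ℕ):ℤ)) *
            Qs m (k-1) n (-(((j.succ : Fin (n+1)):ℕ):ℤ) + 1)
          = m (k - 1 + ((i:ℕ):ℤ) - ((j:ℕ):ℤ)) * Qs m (k-1) n (-((j:ℕ):ℤ)) := by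
        intro j
        have hv : (((j.succ : Fin (n+1)):ℕ):ℤ) = ((j:ℕ):ℤ) + 1 := by
          simp [Fin.val_succ]
        rw [hv]
        congr 1
        · congr 1; ring
        · congr 1; ring
      rw [Finset.sum_congr rfl fun j _ => hterm j]
      have h1 := ortho m (k-1) n hT1 i
      rw [Fin.sum_univ_castSucc] at h1
      simp only [Fin.coe_castSucc, Fin.val_last] at h1
      rw [Qs_top, mul_one] at h1
      exact eq_neg_of_add_eq_zero_left h1
    -- second sum
    have hB : ∑ j : Fin (n+1), m (k + ((i:ℕ):ℤ) - ((j:ℕ):ℤ)) * Qs m k (n+1) (-((j:ℕ):ℤ))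
        = -(m (k + ((i:ℕ):ℤ) - ((n:ℤ) + 1))) := by
      have h2 := ortho m k (n+1) hT2 i.castSucc
      rw [Fin.sum_univ_castSucc] at h2
      simp only [Fin.coe_castSucc, Fin.val_last] at h2
      have htop : Qs m k (n+1) (-(((n+1 : ℕ)):ℤ)) = 1 := Qs_top m k (n+1)
      rw [show (-(((n+1 : ℕ)):ℤ)) = -((n:ℤ)+1) by push_cast; ring] at htop
      rw [show ((((n:ℕ)+1):ℕ):ℤ) = (n:ℤ)+1 by push_cast; ring] at h2
      rw [htop, mul_one] at h2
      exact eq_neg_of_add_eq_zero_left h2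
    rw [hsplit, hA, hB]
    have : k - 1 + ((i:ℕ):ℤ) - (n:ℤ) = k + ((i:ℕ):ℤ) - ((n:ℤ) + 1) := by ring
    rw [this]
    exact sub_self _
  -- the scalar λ
  set lam : R := D (Fin.last n) with hlam
  have hDj : ∀ j : Fin (n+1), D j = Qs m k n (-((j:ℕ):ℤ)) * lam :=
    unique m k n hT3 D hD
  -- identification lam = psi
  have hE1 : ∑ j : Fin (n+1), m (k + (n:ℤ) - ((j:ℕ):ℤ)) * D j = Hq m n (k-1) := by
    have hsplit : ∑ j : Fin (n+1), m (k + (n:ℤ) - ((j:ℕ):ℤ)) * D j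
        = (∑ j : Fin (n+1), m (k + (n:ℤ) - ((j:ℕ):ℤ)) * Qs m (k-1) n (-((j:ℕ):ℤ) + 1))
        - (∑ j : Fin (n+1), m (k + (n:ℤ) - ((j:ℕ):ℤ)) * Qs m k (n+1) (-((j:ℕ):ℤ))) := by
      rw [← Finset.sum_sub_distrib]
      exact Finset.sum_congr rfl fun j _ => by rw [hDdef, mul_sub]
    have hA : ∑ j : Fin (n+1), m (k + (n:ℤ) - ((j:ℕ):ℤ)) * Qs m (k-1) n (-((j:ℕ):ℤ) + 1)
        = Hq m n (k-1) - m (k - 1) := by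
      rw [Fin.sum_univ_succ]
      have h0 : Qs m (k-1) n (-(((0 : Fin (n+1)):ℕ):ℤ) + 1) = 0 := by
        apply Qs_out; right; simp
      rw [h0, mul_zero, zero_add]
      have hterm : ∀ j : Fin n,
          m (k + (n:ℤ) - (((j.succ : Fin (n+1)):ℕ):ℤ)) *
            Qs m (k-1) n (-(((j.succ : Fin (n+1)):ℕ):ℤ) + 1)
          = m (k - 1 + (n:ℤ) - ((j:ℕ):ℤ)) * Qs m (k-1) n (-((j:ℕ):ℤ)) := by
        intro j
        have hv : (((j.succ : Fin (n+1)):ℕ):ℤ) = ((j:ℕ):ℤ) + 1 := by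
          simp [Fin.val_succ]
        rw [hv]
        congr 1
        · congr 1; ring
        · congr 1; ring
      rw [Finset.sum_congr rfl fun j _ => hterm j]
      have h1 := Hq_sum m (k-1) n
      rw [Fin.sum_univ_castSucc] at h1
      simp only [Fin.coe_castSucc, Fin.val_last] at h1
      rw [Qs_top, mul_one] at h1
      rw [show k - 1 + (n:ℤ) - (n:ℤ) = k - 1 by ring] at h1
      rw [h1, add_sub_cancel_right]
    have hB : ∑ j : Fin (n+1), m (k + (n:ℤ) - ((j:ℕ):ℤ)) * Qs m k (n+1) (-((j:ℕ):ℤ))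
        = -(m (k - 1)) := by
      have h2 := ortho m k (n+1) hT2 (Fin.last n)
      rw [Fin.sum_univ_castSucc] at h2
      simp only [Fin.coe_castSucc, Fin.val_last] at h2
      have htop : Qs m k (n+1) (-(((n+1 : ℕ)):ℤ)) = 1 := Qs_top m k (n+1)
      rw [show (-(((n+1 : ℕ)):ℤ)) = -((n:ℤ)+1) by push_cast; ring] at htop
      rw [show ((((n:ℕ)+1):ℕ):ℤ) = (n:ℤ)+1 by push_cast; ring] at h2
      rw [htop, mul_one] at h2
      rw [show k + (n:ℤ) - ((n:ℤ)+1) = k - 1 by ring] at h2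
      exact eq_neg_of_add_eq_zero_left h2
    rw [hsplit, hA, hB]
    abel
  have hE2 : ∑ j : Fin (n+1), m (k + (n:ℤ) - ((j:ℕ):ℤ)) * D j = Hq m n k * lam := by
    rw [Finset.sum_congr rfl fun j _ => by rw [hDj j, ← mul_assoc]]
    rw [← Finset.sum_mul, ← Hq_sum]
  have hlampsi : lam = psi m n k := by
    have h3 : Hq m n k * lam = Hq m n (k-1) := by rw [← hE2, hE1]
    unfold psi
    rw [← h3, inv_mul_cancel_left₀ hH1]
  -- final case analysis
  intro r
  rcases lt_trichotomy r (-(n:ℤ) - 1) with hr | hr | hr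
  · rw [Qs_out m (k-1) n (r+1) (Or.inl (by omega)),
      Qs_out m k (n+1) r (Or.inl (by push_cast; omega)),
      Qs_out m k n r (Or.inl (by omega))]
    simp
  · subst hr
    rw [show -(n:ℤ) - 1 + 1 = -(n:ℤ) by ring, Qs_top]
    have htop : Qs m k (n+1) (-(n:ℤ) - 1) = 1 := by
      have := Qs_top m k (n+1)
      rw [show (-(((n+1 : ℕ)):ℤ)) = -(n:ℤ) - 1 by push_cast; ring] at this
      exact this
    rw [htop, Qs_out m k n _ (Or.inl (by omega))]
    simp
  · by_cases hr2 : r ≤ 0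
    · -- in range: use hDj
      have hjlt : (-r).toNat < n + 1 := by omega
      have hval : -(((⟨(-r).toNat, hjlt⟩ : Fin (n+1)):ℕ):ℤ) = r := by
        simp only []
        omega
      have := hDj ⟨(-r).toNat, hjlt⟩
      rw [hDdef] at this
      simp only [] at this
      rw [hval] at this
      rw [hlampsi] at this
      rw [sub_eq_iff_eq_add'] at this
      exact this
    · rw [Qs_out m (k-1) n (r+1) (Or.inr (by omega)),
        Qs_out m k (n+1) r (Or.inr (by omega)),
        Qs_out m k n r (Or.inr (by omega))]
      simp
end

section
/- Non-commutative full-discrete relativistic Toda equation (Theorem 4.7): for every k ∈ ℤ and every i ≥ 0, assuming all Toeplitz matrices T and all quasi-determinants H, G occurring below are invertible (resp. nonzero), the following identities among the quasi-determinant quantities hold: (ψ_i^{(k+1)} − φ_i^{(k)})·ψ_{i+1}^{(k)} = ψ_i^{(k+1)}·(ψ_i^{(k)} − φ_i^{(k−1)}), and, for i ≥ 1, ψ_i^{(k)} − φ_i^{(k)} = ψ_{i−1}^{(k)} − φ_{i−1}^{(k−1)}. -/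
/-!
All the quantities are Schur complements inside Toeplitz matrices. In `T_{n+2}^{(k)}`, the
complements of the interior block `T_n^{(k)}` at the corners `(n+1, n+1)` and `(0, n+1)` are
`H_n^{(k)}` and `G_n^{(k-1)}`, and those of the block `T_n^{(k+1)}` (rows `1..n`, columns `0..n-1`)
at `(n+1, n)` and `(0, n)` are `H_n^{(k+1)}` and `G_n^{(k)}`. Pairing a row `x` of the inverse `D`
of `T_{n+2}^{(k)}` with such a Schur column gives `D x 0 · G + D x (n+1) · H = δ`; for a single
deleted row and column this says that a quasideterminant is the inverse of an entry of `D`.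
Together these give `H_{n+1}^{(k)} = H_n^{(k)} - H_n^{(k+1)} (G_n^{(k)})⁻¹ G_n^{(k-1)}`, that is
`ψ_n^{(k)} - φ_n^{(k-1)} = (H_n^{(k)})⁻¹ H_{n+1}^{(k-1)}`. Since `T_{n+2}^{(k-1)}` is `T_{n+2}^{(k)}`
with its columns shifted by one, row `0` of `(T_{n+2}^{(k)})⁻¹` is proportional to the last row of
`(T_{n+2}^{(k-1)})⁻¹`, which yields `ψ_{n+1}^{(k)} - φ_{n+1}^{(k)} = (H_n^{(k)})⁻¹ H_{n+1}^{(k-1)}`.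
Both equations of the theorem follow from these two formulas.
-/

open Matrix

section SchurComplement

variable {R : Type*} [Ring R] {ι κ β : Type*} [Fintype β] [DecidableEq β]

noncomputable def schurComplement (M : Matrix ι κ R) (r : β → ι) (c : β → κ) (i : ι)
    (q : κ) : R :=
  M i q - ∑ j, ∑ l, M i (c j) * Ring.inverse (M.submatrix r c) j l * M (r l) q

theorem schurComplement_apply_core_eq_zero {M : Matrix ι κ R} {r : β → ι} {c : β → κ}
    (hA : IsUnit (M.submatrix r c)) (l : β) (q : κ) : schurComplement M r c (r l) q = 0 := by
  have hAA := Ring.mul_inverse_cancel _ hA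
  rw [schurComplement, sub_eq_zero, Finset.sum_comm]
  simp_rw [← Finset.sum_mul]
  change _ = ∑ l', (M.submatrix r c * Ring.inverse (M.submatrix r c)) l l' * M (r l') q
  simp [hAA, Matrix.one_apply]

theorem sum_mul_schurComplement [Fintype ι] [DecidableEq κ] {M : Matrix ι κ R}
    {D : Matrix κ ι R} (hDM : D * M = 1) (r : β → ι) (c : β → κ) {x : κ} (hx : ∀ j, c j ≠ x)
    (q : κ) :
    ∑ i, D x i * schurComplement M r c i q = if x = q then 1 else 0 := by
  have hrow : ∀ y, ∑ i, D x i * M i y = if x = y then 1 else 0 := fun y => by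
    rw [← Matrix.mul_apply, hDM, Matrix.one_apply]
  simp only [schurComplement, mul_sub, Finset.sum_sub_distrib, Finset.mul_sum, hrow]
  rw [Finset.sum_comm, sub_eq_self]
  refine Finset.sum_eq_zero fun j _ => ?_
  rw [Finset.sum_comm]
  refine Finset.sum_eq_zero fun l _ => ?_
  simp_rw [← mul_assoc]
  rw [← Finset.sum_mul, ← Finset.sum_mul, hrow, if_neg (hx j).symm, zero_mul, zero_mul]

end SchurComplement

section Blocks

variable {R : Type*} [Ring R] {α β ι : Type*} [Fintype α] [Fintype β] [Fintype ι]
  [DecidableEq α] [DecidableEq β] [DecidableEq ι]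

theorem isUnit_fromBlocks_of_isUnit_schur {A : Matrix β β R} {B : Matrix β α R}
    {C : Matrix α β R} {D : Matrix α α R} (hA : IsUnit A)
    (hS : IsUnit (D - C * Ring.inverse A * B)) : IsUnit (fromBlocks A B C D) := by
  set A' := Ring.inverse A
  set S := D - C * A' * B
  set S' := Ring.inverse S
  have hD : D = S + C * A' * B := (sub_add_cancel _ _).symm
  have hAA' : A * A' = 1 := Ring.mul_inverse_cancel _ hA
  have hA'A : A' * A = 1 := Ring.inverse_mul_cancel _ hA
  have hSS' : S * S' = 1 := Ring.mul_inverse_cancel _ hS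
  have hS'S : S' * S = 1 := Ring.inverse_mul_cancel _ hS
  refine ⟨⟨fromBlocks A B C D,
    fromBlocks (A' + A' * B * S' * C * A') (-(A' * B * S')) (-(S' * C * A')) S', ?_, ?_⟩, rfl⟩
  · rw [fromBlocks_multiply, ← fromBlocks_one, hD]
    congr 1 <;>
      simp only [Matrix.mul_add, Matrix.add_mul, Matrix.mul_neg, ← Matrix.mul_assoc, hAA',
        hSS', Matrix.one_mul] <;> abel
  · rw [fromBlocks_multiply, ← fromBlocks_one, hD]
    congr 1 <;>
      simp only [Matrix.mul_add, Matrix.add_mul, Matrix.neg_mul, Matrix.mul_assoc,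
        hA'A, hS'S, Matrix.mul_one] <;> abel

theorem isUnit_of_isUnit_submatrix_equiv {X : Matrix ι ι R} (σ τ : α ≃ ι)
    (h : IsUnit (X.submatrix σ τ)) : IsUnit X := by
  obtain ⟨⟨Y, N, hYN, hNY⟩, hY : Y = X.submatrix σ τ⟩ := h
  have hX : X = Y.submatrix σ.symm τ.symm := by simp [hY]
  refine ⟨⟨X, N.submatrix τ.symm σ.symm, ?_, ?_⟩, rfl⟩
  · rw [hX, submatrix_mul_equiv, hYN, submatrix_one_equiv]
  · rw [hX, submatrix_mul_equiv, hNY, submatrix_one_equiv]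

end Blocks

section Quasideterminant

variable {R : Type*} [Ring R] {n : ℕ}

noncomputable def quasidet (X : Matrix (Fin (n + 1)) (Fin (n + 1)) R) (p q : Fin (n + 1)) : R :=
  schurComplement X p.succAbove q.succAbove p q

theorem mul_quasidet_eq_one {X D : Matrix (Fin (n + 1)) (Fin (n + 1)) R} (hDX : D * X = 1)
    {p q : Fin (n + 1)} (hA : IsUnit (X.submatrix p.succAbove q.succAbove)) :
    D q p * quasidet X p q = 1 := by
  have h := sum_mul_schurComplement hDX p.succAbove q.succAbove (Fin.succAbove_ne q) q
  rwa [Fin.sum_univ_succAbove _ p, if_pos rfl, Finset.sum_eq_zero, add_zero] at h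
  intro l _
  rw [schurComplement_apply_core_eq_zero hA, mul_zero]

def succAboveSumEquiv (p : Fin (n + 1)) : Fin n ⊕ Unit ≃ Fin (n + 1) :=
  (Equiv.optionEquivSumPUnit (Fin n)).symm.trans (finSuccEquiv' p).symm

theorem submatrix_succAboveSumEquiv {α : Type*} (X : Matrix (Fin (n + 1)) (Fin (n + 1)) α)
    (p q : Fin (n + 1)) :
    X.submatrix (succAboveSumEquiv p) (succAboveSumEquiv q) =
      fromBlocks (X.submatrix p.succAbove q.succAbove) (of fun l _ => X (p.succAbove l) q)
        (of fun _ j => X p (q.succAbove j)) (of fun _ _ => X p q) := by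
  ext (i | i) (j | j) <;> simp [succAboveSumEquiv]

end Quasideterminant

section QuasideterminantDivisionRing

variable {R : Type*} [DivisionRing R] {n : ℕ}

theorem isUnit_of_quasidet_ne_zero {X : Matrix (Fin (n + 1)) (Fin (n + 1)) R} {p q : Fin (n + 1)}
    (hA : IsUnit (X.submatrix p.succAbove q.succAbove)) (hX : quasidet X p q ≠ 0) : IsUnit X := by
  refine isUnit_of_isUnit_submatrix_equiv (succAboveSumEquiv p) (succAboveSumEquiv q) ?_
  rw [submatrix_succAboveSumEquiv]
  refine isUnit_fromBlocks_of_isUnit_schur hA ?_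
  set S := (of fun _ _ => X p q) - (of fun _ j => X p (q.succAbove j)) *
    Ring.inverse (X.submatrix p.succAbove q.succAbove) * (of fun l _ => X (p.succAbove l) q)
  have hS : S = of fun _ _ => quasidet X p q := by
    ext
    simp only [S, quasidet, schurComplement, Matrix.sub_apply, of_apply, mul_apply,
      Finset.sum_mul]
    rw [Finset.sum_comm]
  rw [hS]
  refine ⟨⟨_, of fun _ _ => (quasidet X p q)⁻¹, ?_, ?_⟩, rfl⟩ <;> ext <;>
    simp [mul_apply, hX]

end QuasideterminantDivisionRing

theorem mul_schurComplement_zero_add_mul_schurComplement_last {R : Type*} [Ring R] {n : ℕ}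
    {M D : Matrix (Fin (n + 2)) (Fin (n + 2)) R} (hDM : D * M = 1) {c : Fin n → Fin (n + 2)}
    (hA : IsUnit (M.submatrix (Fin.succ ∘ Fin.castSucc) c)) {x : Fin (n + 2)}
    (hx : ∀ j, c j ≠ x) (q : Fin (n + 2)) :
    D x 0 * schurComplement M (Fin.succ ∘ Fin.castSucc) c 0 q +
        D x (Fin.last (n + 1)) *
          schurComplement M (Fin.succ ∘ Fin.castSucc) c (Fin.last (n + 1)) q =
      if x = q then 1 else 0 := by
  rw [← sum_mul_schurComplement hDM _ c hx q, Fin.sum_univ_succ, Fin.sum_univ_castSucc,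
    Finset.sum_eq_zero fun l _ => by rw [← Function.comp_apply (f := Fin.succ),
      schurComplement_apply_core_eq_zero hA, mul_zero], zero_add, Fin.succ_last]

theorem apply_eq_mul_inverse_apply_of_vecMul {R ι : Type*} [Ring R] [Fintype ι] [DecidableEq ι]
    {Z W : Matrix ι ι R} (hZW : Z * W = 1) {v : ι → R} {q : ι}
    (hv : ∀ j, j ≠ q → (v ᵥ* Z) j = 0) (x : ι) : v x = (v ᵥ* Z) q * W q x := by
  have hsingle : v ᵥ* Z = Pi.single q ((v ᵥ* Z) q) := by
    ext j
    by_cases hj : j = q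
    · subst hj; simp
    · simp [hj, hv j hj]
  calc v x = (v ᵥ* (Z * W)) x := by rw [hZW, vecMul_one]
    _ = _ := by rw [← vecMul_vecMul, hsingle, single_vecMul]; simp

section Toeplitz

variable {R : Type*} [DivisionRing R] (m : ℤ → R)

theorem Hq_eq_schurComplement {ι κ : Type*} {n : ℕ} {k : ℤ} {M : Matrix ι κ R}
    {r : Fin n → ι} {c : Fin n → κ} {i : ι} {q : κ} (hA : M.submatrix r c = Tmat m k n)
    (hiq : M i q = m k)
    (hi : ∀ j : Fin n, M i (c j) = m (k + n - j))
    (hq : ∀ l : Fin n, M (r l) q = m (k - n + l)) :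
    Hq m n k = schurComplement M r c i q := by
  simp only [Hq, schurComplement, hA, hiq, hi, hq]

theorem Gq_eq_schurComplement {ι κ : Type*} {n : ℕ} {k : ℤ} {M : Matrix ι κ R}
    {r : Fin n → ι} {c : Fin n → κ} {i : ι} {q : κ}
    (hA : M.submatrix r c = Tmat m (k + 1) n)
    (hiq : M i q = m (k - n)) (hi : ∀ j : Fin n, M i (c j) = m (k - j))
    (hq : ∀ l : Fin n, M (r l) q = m (k + 1 - n + l)) :
    Gq m n k = schurComplement M r c i q := by
  simp only [Gq, schurComplement, hA, hiq, hi, hq]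

theorem Tmat_apply (k : ℤ) (n : ℕ) (i j : Fin n) : Tmat m k n i j = m (k + i - j) := rfl

theorem Tmat_submatrix_castSucc (k : ℤ) (n : ℕ) :
    (Tmat m k (n + 1)).submatrix Fin.castSucc Fin.castSucc = Tmat m k n := by
  ext i j
  simp [Tmat]

theorem Tmat_submatrix_succ (k : ℤ) (n : ℕ) :
    (Tmat m k (n + 1)).submatrix Fin.succ Fin.succ = Tmat m k n := by
  ext i j
  simp only [submatrix_apply, Tmat_apply, Fin.val_succ]
  congr 1; push_cast; ring

theorem Tmat_submatrix_succ_castSucc (k : ℤ) (n : ℕ) :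
    (Tmat m k (n + 1)).submatrix Fin.succ Fin.castSucc = Tmat m (k + 1) n := by
  ext i j
  simp only [submatrix_apply, Tmat_apply, Fin.val_succ, Fin.val_castSucc]
  congr 1; push_cast; ring

theorem Tmat_sub_one_apply_castSucc (k : ℤ) (n : ℕ) (i : Fin (n + 1)) (j : Fin n) :
    Tmat m (k - 1) (n + 1) i j.castSucc = Tmat m k (n + 1) i j.succ := by
  simp only [Tmat_apply, Fin.val_succ, Fin.val_castSucc]
  congr 1; push_cast; ring

theorem Hq_eq_quasidet (k : ℤ) (n : ℕ) :
    Hq m n k = quasidet (Tmat m k (n + 1)) (Fin.last n) (Fin.last n) := by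
  refine Hq_eq_schurComplement m ?_ ?_ (fun j => ?_) (fun l => ?_) <;>
    simp only [Fin.succAbove_last, Tmat_submatrix_castSucc, Tmat_apply, Fin.val_last,
      Fin.val_castSucc] <;>
    congr 1 <;> ring

theorem Gq_eq_quasidet (k : ℤ) (n : ℕ) :
    Gq m n k = quasidet (Tmat m k (n + 1)) 0 (Fin.last n) := by
  refine Gq_eq_schurComplement m ?_ ?_ (fun j => ?_) (fun l => ?_) <;>
    simp only [Fin.succAbove_last, Fin.succAbove_zero, Tmat_submatrix_succ_castSucc, Tmat_apply,
      Fin.val_last, Fin.val_castSucc, Fin.val_succ, Fin.val_zero] <;>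
    congr 1 <;> push_cast <;> ring

end Toeplitz

section ToeplitzInverse

variable {R : Type*} [DivisionRing R] (m : ℤ → R) {n : ℕ} {k : ℤ}

theorem isUnit_Tmat_succ (hT : IsUnit (Tmat m k n)) (hH : Hq m n k ≠ 0) :
    IsUnit (Tmat m k (n + 1)) := by
  refine isUnit_of_quasidet_ne_zero (p := Fin.last n) (q := Fin.last n) ?_ ?_
  · rwa [Fin.succAbove_last, Tmat_submatrix_castSucc]
  · rwa [← Hq_eq_quasidet]

theorem inverse_Tmat_mul_Hq (hT : IsUnit (Tmat m k n)) (hT' : IsUnit (Tmat m k (n + 1))) :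
    Ring.inverse (Tmat m k (n + 1)) (Fin.last n) (Fin.last n) * Hq m n k = 1 := by
  rw [Hq_eq_quasidet]
  refine mul_quasidet_eq_one (Ring.inverse_mul_cancel _ hT') ?_
  rwa [Fin.succAbove_last, Tmat_submatrix_castSucc]

theorem inverse_Tmat_mul_Gq (hT : IsUnit (Tmat m (k + 1) n)) (hT' : IsUnit (Tmat m k (n + 1))) :
    Ring.inverse (Tmat m k (n + 1)) (Fin.last n) 0 * Gq m n k = 1 := by
  rw [Gq_eq_quasidet]
  refine mul_quasidet_eq_one (Ring.inverse_mul_cancel _ hT') ?_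
  rwa [Fin.succAbove_last, Fin.succAbove_zero, Tmat_submatrix_succ_castSucc]

theorem inverse_Tmat_zero_zero_ne_zero (hT : IsUnit (Tmat m k n))
    (hT' : IsUnit (Tmat m k (n + 1))) : Ring.inverse (Tmat m k (n + 1)) 0 0 ≠ 0 := by
  refine left_ne_zero_of_mul_eq_one (mul_quasidet_eq_one (Ring.inverse_mul_cancel _ hT') ?_)
  rwa [Fin.succAbove_zero, Tmat_submatrix_succ]

theorem mul_Gq_sub_one_add_mul_Hq (hT : IsUnit (Tmat m k n))
    {D : Matrix (Fin (n + 2)) (Fin (n + 2)) R} (hDM : D * Tmat m k (n + 2) = 1)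
    {x : Fin (n + 2)} (hx : x = 0 ∨ x = Fin.last (n + 1)) :
    D x 0 * Gq m n (k - 1) + D x (Fin.last (n + 1)) * Hq m n k =
      if x = Fin.last (n + 1) then 1 else 0 := by
  have hA : (Tmat m k (n + 2)).submatrix (Fin.succ ∘ Fin.castSucc) (Fin.succ ∘ Fin.castSucc) =
      Tmat m k n := by
    ext i j
    simp only [submatrix_apply, Function.comp_apply, Tmat_apply, Fin.val_succ, Fin.val_castSucc]
    congr 1; push_cast; ring
  rw [Gq_eq_schurComplement m (M := Tmat m k (n + 2)) (i := 0) (q := Fin.last (n + 1))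
      (by rw [sub_add_cancel, hA]) ?_ (fun j => ?_) (fun l => ?_),
    Hq_eq_schurComplement m (i := Fin.last (n + 1)) (q := Fin.last (n + 1)) hA ?_ (fun j => ?_)
      (fun l => ?_)]
  · refine mul_schurComplement_zero_add_mul_schurComplement_last hDM (by rw [hA]; exact hT)
      (fun j => ?_) _
    rcases hx with rfl | rfl
    · simp
    · simp [Fin.ext_iff]; omega
  all_goals
    simp only [Tmat_apply, Function.comp_apply, Fin.val_succ, Fin.val_castSucc, Fin.val_last,
      Fin.val_zero]
    congr 1; push_cast; ring

theorem mul_Gq_add_mul_Hq_add_one (hT : IsUnit (Tmat m (k + 1) n))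
    {D : Matrix (Fin (n + 2)) (Fin (n + 2)) R} (hDM : D * Tmat m k (n + 2) = 1) :
    D (Fin.last (n + 1)) 0 * Gq m n k + D (Fin.last (n + 1)) (Fin.last (n + 1)) * Hq m n (k + 1)
      = 0 := by
  have hA : (Tmat m k (n + 2)).submatrix (Fin.succ ∘ Fin.castSucc)
      (Fin.castSucc ∘ Fin.castSucc) = Tmat m (k + 1) n := by
    ext i j
    simp only [submatrix_apply, Function.comp_apply, Tmat_apply, Fin.val_succ, Fin.val_castSucc]
    congr 1; push_cast; ring
  rw [Gq_eq_schurComplement m (M := Tmat m k (n + 2)) (i := 0) (q := (Fin.last n).castSucc)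
      hA ?_ (fun j => ?_) (fun l => ?_),
    Hq_eq_schurComplement m (i := Fin.last (n + 1)) (q := (Fin.last n).castSucc) hA ?_
      (fun j => ?_) (fun l => ?_)]
  · rw [mul_schurComplement_zero_add_mul_schurComplement_last hDM (by rw [hA]; exact hT)
      (fun j => ?_) _, if_neg]
    · simp [Fin.ext_iff]
    · simp [Fin.ext_iff]; omega
  all_goals
    simp only [Tmat_apply, Function.comp_apply, Fin.val_succ, Fin.val_castSucc, Fin.val_last,
      Fin.val_zero]
    congr 1; push_cast; ring

theorem Hq_succ_eq (hT : IsUnit (Tmat m k n)) (hT' : IsUnit (Tmat m (k + 1) n))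
    (hH : Hq m n k ≠ 0) (hH' : Hq m (n + 1) k ≠ 0) (hG : Gq m n k ≠ 0) :
    Hq m (n + 1) k = Hq m n k - Hq m n (k + 1) * (Gq m n k)⁻¹ * Gq m n (k - 1) := by
  have hM := isUnit_Tmat_succ m (isUnit_Tmat_succ m hT hH) hH'
  set D := Ring.inverse (Tmat m k (n + 2))
  have hDM : D * Tmat m k (n + 2) = 1 := Ring.inverse_mul_cancel _ hM
  set a := D (Fin.last (n + 1)) (Fin.last (n + 1))
  set b := D (Fin.last (n + 1)) 0
  have ha : a * Hq m (n + 1) k = 1 := inverse_Tmat_mul_Hq m (isUnit_Tmat_succ m hT hH) hM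
  have ha₀ : a ≠ 0 := left_ne_zero_of_mul_eq_one ha
  have h₁ : b * Gq m n (k - 1) + a * Hq m n k = 1 := by
    simpa using mul_Gq_sub_one_add_mul_Hq m hT hDM (Or.inr rfl)
  have h₂ : b * Gq m n k + a * Hq m n (k + 1) = 0 := mul_Gq_add_mul_Hq_add_one m hT' hDM
  have hH₀ : Hq m n k = a⁻¹ - a⁻¹ * b * Gq m n (k - 1) :=
    calc Hq m n k = a⁻¹ * (a * Hq m n k) := (inv_mul_cancel_left₀ ha₀ _).symm
      _ = _ := by rw [eq_sub_of_add_eq' h₁, mul_sub, mul_one, mul_assoc]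
  have hH₁ : Hq m n (k + 1) = a⁻¹ * -(b * Gq m n k) :=
    calc Hq m n (k + 1) = a⁻¹ * (a * Hq m n (k + 1)) := (inv_mul_cancel_left₀ ha₀ _).symm
      _ = _ := by rw [eq_neg_of_add_eq_zero_right h₂]
  rw [eq_inv_of_mul_eq_one_right ha, hH₀, hH₁]
  simp only [mul_neg, neg_mul, mul_assoc, mul_inv_cancel_left₀ hG, sub_neg_eq_add,
    sub_add_cancel]

theorem psi_sub_phi (hT : IsUnit (Tmat m (k - 1) n)) (hT' : IsUnit (Tmat m k n))
    (hH : Hq m n (k - 1) ≠ 0) (hH' : Hq m n k ≠ 0) (hH₁ : Hq m (n + 1) (k - 1) ≠ 0)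
    (hG : Gq m n (k - 1) ≠ 0) :
    psi m n k - phi m n (k - 1) = (Hq m n k)⁻¹ * Hq m (n + 1) (k - 1) := by
  have h := Hq_succ_eq m hT (by rwa [sub_add_cancel]) hH hH₁ hG
  rw [sub_add_cancel] at h
  rw [psi, phi, h, mul_sub, mul_assoc, inv_mul_cancel_left₀ hH']

theorem psi_succ_sub_phi_succ (hT : IsUnit (Tmat m k n)) (hT₁ : IsUnit (Tmat m k (n + 1)))
    (hT₂ : IsUnit (Tmat m (k + 1) (n + 1))) (hT₃ : IsUnit (Tmat m (k - 1) (n + 1)))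
    (hH₁ : Hq m (n + 1) k ≠ 0) (hH₂ : Hq m (n + 1) (k - 1) ≠ 0) :
    psi m (n + 1) k - phi m (n + 1) k = (Hq m n k)⁻¹ * Hq m (n + 1) (k - 1) := by
  have hY := isUnit_Tmat_succ m hT₁ hH₁
  have hZ := isUnit_Tmat_succ m hT₃ hH₂
  set B := Ring.inverse (Tmat m k (n + 2))
  set W := Ring.inverse (Tmat m (k - 1) (n + 2))
  have hBY : B * Tmat m k (n + 2) = 1 := Ring.inverse_mul_cancel _ hY
  have hZW : Tmat m (k - 1) (n + 2) * W = 1 := Ring.mul_inverse_cancel _ hZ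
  set ℓ := Fin.last (n + 1)
  have hB₀₀ : B 0 0 ≠ 0 := inverse_Tmat_zero_zero_ne_zero m hT₁ hY
  have hℓ : B ℓ 0 * Gq m n (k - 1) + B ℓ ℓ * Hq m n k = 1 := by
    simpa using mul_Gq_sub_one_add_mul_Hq m hT hBY (Or.inr rfl)
  have h₀ : B 0 0 * Gq m n (k - 1) + B 0 ℓ * Hq m n k = 0 := by
    simpa [ℓ, Fin.ext_iff] using mul_Gq_sub_one_add_mul_Hq m hT hBY (x := 0) (Or.inl rfl)
  -- the columns of `T^{(k-1)}` other than the last are columns of `T^{(k)}`, so `B 0` kills them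
  have hrow := apply_eq_mul_inverse_apply_of_vecMul hZW (v := B 0) (q := ℓ) fun j hj => by
    obtain ⟨j, rfl⟩ := Fin.exists_castSucc_eq.mpr hj
    simp only [vecMul, dotProduct, Tmat_sub_one_apply_castSucc]
    rw [← mul_apply, hBY, one_apply_ne (Fin.succ_ne_zero j).symm]
  have hprop : B 0 0 * Gq m (n + 1) (k - 1) = B 0 ℓ * Hq m (n + 1) (k - 1) := by
    rw [hrow 0, hrow ℓ, mul_assoc, mul_assoc,
      inverse_Tmat_mul_Gq m (by rwa [sub_add_cancel]) hZ, inverse_Tmat_mul_Hq m hT₃ hZ]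
  have hBℓℓ : B ℓ ℓ = (Hq m (n + 1) k)⁻¹ :=
    eq_inv_of_mul_eq_one_left (inverse_Tmat_mul_Hq m hT₁ hY)
  have hBℓ₀ : B ℓ 0 = (Gq m (n + 1) k)⁻¹ :=
    eq_inv_of_mul_eq_one_left (inverse_Tmat_mul_Gq m hT₂ hY)
  set u := (B 0 0)⁻¹ * B 0 ℓ
  have hG' : Gq m (n + 1) (k - 1) = u * Hq m (n + 1) (k - 1) := by
    rw [mul_assoc, ← hprop, inv_mul_cancel_left₀ hB₀₀]
  have hg : Gq m n (k - 1) = -(u * Hq m n k) :=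
    calc Gq m n (k - 1) = (B 0 0)⁻¹ * (B 0 0 * Gq m n (k - 1)) :=
          (inv_mul_cancel_left₀ hB₀₀ _).symm
      _ = _ := by rw [eq_neg_of_add_eq_zero_left h₀, mul_neg, mul_assoc]
  have hkey : B ℓ ℓ - B ℓ 0 * u = (Hq m n k)⁻¹ := by
    refine eq_inv_of_mul_eq_one_left ?_
    rw [sub_mul, mul_assoc, ← neg_neg (u * Hq m n k), ← hg, mul_neg, sub_neg_eq_add, add_comm,
      hℓ]
  rw [psi, phi, ← hBℓℓ, ← hBℓ₀, hG', ← mul_assoc, ← sub_mul, hkey]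

end ToeplitzInverse

theorem stmt_17_general {R : Type*} [DivisionRing R] (m : ℤ → R) (k : ℤ) (i : ℕ)
    (hT1 : IsUnit (Tmat m (k + 1) i))
    (hT2 : IsUnit (Tmat m k i))
    (hT5 : IsUnit (Tmat m (k - 1) i))
    (hT6 : IsUnit (Tmat m k (i - 1)))
    (hT7 : IsUnit (Tmat m (k - 1) (i - 1)))
    (hH1 : Hq m i (k + 1) ≠ 0)
    (hH2 : Hq m i k ≠ 0)
    (hH3 : Hq m (i + 1) k ≠ 0)
    (hH4 : Hq m (i + 1) (k - 1) ≠ 0)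
    (hH5 : Hq m i (k - 1) ≠ 0)
    (hH6 : Hq m (i - 1) k ≠ 0)
    (hH7 : Hq m (i - 1) (k - 1) ≠ 0)
    (hG1 : Gq m i k ≠ 0)
    (hG2 : Gq m i (k - 1) ≠ 0)
    (hG4 : Gq m (i - 1) (k - 1) ≠ 0) :
    (psi m i (k + 1) - phi m i k) * psi m (i + 1) k
        = psi m i (k + 1) * (psi m i k - phi m i (k - 1)) ∧
      (1 ≤ i →
        psi m i k - phi m i k = psi m (i - 1) k - phi m (i - 1) (k - 1)) := by
  refine ⟨?_, fun hi => ?_⟩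
  · have E₁ : psi m i (k + 1) - phi m i k = (Hq m i (k + 1))⁻¹ * Hq m (i + 1) k := by
      simpa using psi_sub_phi m (k := k + 1) (by simpa using hT2) hT1 (by simpa using hH2) hH1
        (by simpa using hH3) (by simpa using hG1)
    rw [E₁, psi_sub_phi m hT5 hT2 hH5 hH2 hH4 hG2, psi, psi, add_sub_cancel_right]
    simp only [mul_assoc, mul_inv_cancel_left₀ hH3, mul_inv_cancel_left₀ hH2]
  · obtain ⟨j, rfl⟩ : ∃ j, i = j + 1 := ⟨i - 1, by omega⟩
    rw [Nat.add_sub_cancel, psi_succ_sub_phi_succ m (n := j) hT6 hT2 hT1 hT5 hH2 hH5,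
      psi_sub_phi m (n := j) hT7 hT6 hH7 hH6 hH5 hG4]

/-- Non-commutative full-discrete relativistic Toda equation:
`(ψ_i^{(k+1)} − φ_i^{(k)})·ψ_{i+1}^{(k)} = ψ_i^{(k+1)}·(ψ_i^{(k)} − φ_i^{(k−1)})`,
and, for `i ≥ 1`, `ψ_i^{(k)} − φ_i^{(k)} = ψ_{i−1}^{(k)} − φ_{i−1}^{(k−1)}`. -/
theorem stmt_17 {R : Type*} [DivisionRing R] (m : ℤ → R) (k : ℤ) (i : ℕ)
    (hT1 : IsUnit (Tmat m (k + 1) i))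
    (hT2 : IsUnit (Tmat m k i))
    (hT3 : IsUnit (Tmat m k (i + 1)))
    (hT4 : IsUnit (Tmat m (k - 1) (i + 1)))
    (hT5 : IsUnit (Tmat m (k - 1) i))
    (hT6 : IsUnit (Tmat m k (i - 1)))
    (hT7 : IsUnit (Tmat m (k - 1) (i - 1)))
    (hH1 : Hq m i (k + 1) ≠ 0)
    (hH2 : Hq m i k ≠ 0)
    (hH3 : Hq m (i + 1) k ≠ 0)
    (hH4 : Hq m (i + 1) (k - 1) ≠ 0)
    (hH5 : Hq m i (k - 1) ≠ 0)
    (hH6 : Hq m (i - 1) k ≠ 0)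
    (hH7 : Hq m (i - 1) (k - 1) ≠ 0)
    (hG1 : Gq m i k ≠ 0)
    (hG2 : Gq m i (k - 1) ≠ 0)
    (hG3 : Gq m i (k - 2) ≠ 0)
    (hG4 : Gq m (i - 1) (k - 1) ≠ 0)
    (hG5 : Gq m (i - 1) (k - 2) ≠ 0) :
    (psi m i (k + 1) - phi m i k) * psi m (i + 1) k
        = psi m i (k + 1) * (psi m i k - phi m i (k - 1)) ∧
      (1 ≤ i →
        psi m i k - phi m i k = psi m (i - 1) k - phi m (i - 1) (k - 1)) :=
  stmt_17_general m k i hT1 hT2 hT5 hT6 hT7 hH1 hH2 hH3 hH4 hH5 hH6 hH7 hG1 hG2 hG4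
end

section
/- Negative time flow of non-commutative Laurent bi-orthogonal polynomials (Proposition 4.8): let D : R → R satisfy D(a + b) = D(a) + D(b) and D(a·b) = D(a)·b + a·D(b) for all a, b ∈ R, and suppose D(m(j)) = m(j−1) for every j ∈ ℤ. Then for every n ≥ 1, assuming all Toeplitz matrices T and all quasi-determinants H, G occurring below are invertible (resp. nonzero), applying D to each coefficient of the Laurent polynomial (Q_n^{(0)})* yields the Laurent polynomial (z^{−1}·(Q_{n−1}^{(0)})* − (Q_n^{(0)})*)·ξ_{n−1}, where ξ_{n−1} := ψ_{n−1}^{(0)} − φ_{n−1}^{(−1)}; i.e. for every r, D of the coefficient of z^{−r} in (Q_n^{(0)})* equals the coefficient of z^{−r} in (z^{−1}·(Q_{n−1}^{(0)})* − (Q_n^{(0)})*)·ξ_{n−1}. -/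
/-!
Write `L(z^j f) = ∑ₑ m(j + e) f(e)` for the moment functional. Invertibility of `T_n^{(k)}`
makes `(Q_n^{(k)})*` the unique Laurent polynomial supported in `[-n, 0]` with leading
coefficient `1` and `L(z^{k+i} Q) = 0` for `0 ≤ i < n`; moreover
`H_n^{(k)} = L(z^{k+n} Q_n^{(k)})` and `G_n^{(k-1)} = L(z^{k-1} Q_n^{(k)})`. Uniqueness gives
`Q_{n+1}^{(k)} = z⁻¹ Q_n^{(k-1)} - Q_n^{(k)} ψ_n^{(k)}`, hence
`G_{n+1}^{(k-1)} = G_n^{(k-2)} - G_n^{(k-1)} ψ_n^{(k)}`. Applying `D` to the orthogonality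
relations, `D Q_{n+1}^{(k)}` and `(z⁻¹ Q_n^{(k)} - Q_{n+1}^{(k)}) ξ`, where
`ξ = ψ_n^{(k)} - φ_n^{(k-1)}`, are both supported in `(-n-1, 0]` and have the same moments
`L(z^{k+i} ·)`, `0 ≤ i ≤ n`: zero for `i > 0`, and equal for `i = 0` by the recurrence for `G`.
-/

open Finset Matrix

theorem sum_Icc_neg_natCast_zero {M : Type*} [AddCommMonoid M] (n : ℕ) (g : ℤ → M) :
    ∑ e ∈ Icc (-(n : ℤ)) 0, g e = g (-n) + ∑ l : Fin n, g (-l) := by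
  rw [← Ioc_insert_left (by omega), sum_insert (by simp),
    Fin.sum_univ_eq_sum_range (fun l => g (-l))]
  congr 1
  refine sum_nbij' (fun e => (-e).toNat) (fun l => -(l : ℤ)) (fun e he => ?_) (fun l hl => ?_)
    (fun e he => ?_) (fun l _ => ?_) (fun e he => congrArg g ?_) <;>
    simp only [mem_Ioc, mem_range] at * <;>
    omega

section Derivation

variable {R : Type*} [Ring R] {D : R → R}

theorem map_sum_of_map_add (hD : ∀ a b, D (a + b) = D a + D b) {ι : Type*} (s : Finset ι)
    (f : ι → R) : D (∑ i ∈ s, f i) = ∑ i ∈ s, D (f i) :=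
  map_sum (AddMonoidHom.mk' D hD) f s

theorem map_zero_of_map_add (hD : ∀ a b, D (a + b) = D a + D b) : D 0 = 0 :=
  map_zero (AddMonoidHom.mk' D hD)

theorem map_one_of_leibniz (hD : ∀ a b, D (a * b) = D a * b + a * D b) : D 1 = 0 := by
  simpa using hD 1 1

end Derivation

section Moments

variable {R : Type*} [DivisionRing R] (m : ℤ → R)

/-- `L(z^j f)` for the moment functional `L(z^e) = m e`, where `f` is supported in `[-n, 0]`. -/
noncomputable def momentPairing (n : ℕ) (j : ℤ) (f : ℤ → R) : R :=
  ∑ e ∈ Icc (-(n : ℤ)) 0, m (j + e) * f e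

variable {m}

theorem momentPairing_sub (n : ℕ) (j : ℤ) (f g : ℤ → R) :
    momentPairing m n j (fun e => f e - g e)
      = momentPairing m n j f - momentPairing m n j g := by
  simp only [momentPairing, mul_sub, sum_sub_distrib]

theorem momentPairing_mul_right (n : ℕ) (j : ℤ) (f : ℤ → R) (c : R) :
    momentPairing m n j (fun e => f e * c) = momentPairing m n j f * c := by
  simp only [momentPairing, sum_mul, mul_assoc]

theorem momentPairing_succ {n : ℕ} {f : ℤ → R} (hf : f (-(n + 1 : ℕ)) = 0) (j : ℤ) :
    momentPairing m (n + 1) j f = momentPairing m n j f := by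
  rw [momentPairing, momentPairing, ← Ioc_insert_left (by omega), sum_insert (by simp), hf,
    mul_zero, zero_add]
  congr 1
  ext e
  simp only [mem_Ioc, mem_Icc]
  omega

theorem momentPairing_shift {n : ℕ} {f : ℤ → R} (hf : f 1 = 0) (j : ℤ) :
    momentPairing m (n + 1) j (fun e => f (e + 1)) = momentPairing m n (j - 1) f := by
  have hshift : ∑ e ∈ Icc (-((n + 1 : ℕ) : ℤ)) 0, m (j + e) * f (e + 1)
      = ∑ e ∈ Icc (-(n : ℤ)) 1, m (j - 1 + e) * f e := by
    rw [show Icc (-(n : ℤ)) 1 = Icc (-((n + 1 : ℕ) : ℤ) + 1) (0 + 1) by congr 1; omega,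
      ← map_add_right_Icc, sum_map]
    refine sum_congr rfl fun e _ => ?_
    simp only [addRightEmbedding_apply, sub_add_add_cancel]
  rw [momentPairing, momentPairing, hshift]
  refine (sum_subset (Icc_subset_Icc_right zero_le_one) fun e he he' => ?_).symm
  obtain rfl : e = 1 := by simp only [mem_Icc] at he he'; omega
  rw [hf, mul_zero]

theorem momentPairing_shift_sub_mul {n : ℕ} {f g : ℤ → R} (hf : f 1 = 0)
    (hg : g (-(n + 1 : ℕ)) = 0) (j : ℤ) (c : R) :
    momentPairing m (n + 1) j (fun e => f (e + 1) - g e * c)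
      = momentPairing m n (j - 1) f - momentPairing m n j g * c := by
  rw [momentPairing_sub, momentPairing_shift hf, momentPairing_mul_right, momentPairing_succ hg]

theorem momentPairing_map {D : R → R} (hD_add : ∀ a b, D (a + b) = D a + D b)
    (hD_mul : ∀ a b, D (a * b) = D a * b + a * D b) (hm : ∀ j, D (m j) = m (j - 1))
    (n : ℕ) (j : ℤ) (f : ℤ → R) :
    D (momentPairing m n j f)
      = momentPairing m n (j - 1) f + momentPairing m n j (fun e => D (f e)) := by
  simp only [momentPairing, map_sum_of_map_add hD_add, hD_mul, hm, sum_add_distrib,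
    sub_add_eq_add_sub]

theorem Qs_eq_zero_of_notMem {k : ℤ} {n : ℕ} {e : ℤ} (he : e ∉ Icc (-(n : ℤ)) 0) :
    Qs m k n e = 0 := by
  simp only [mem_Icc] at he
  rw [Qs, if_neg (by omega), dif_neg (by omega)]

theorem Qs_neg_natCast_self (k : ℤ) (n : ℕ) : Qs m k n (-n) = 1 := if_pos rfl

theorem Qs_neg_val {k : ℤ} {n : ℕ} (l : Fin n) :
    Qs m k n (-l) = -(Ring.inverse (Tmat m k n) *ᵥ fun j : Fin n => m (k - n + j)) l := by
  rw [Qs, if_neg (by omega), dif_pos (by omega)]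
  simp only [neg_neg, Int.toNat_natCast, Fin.eta, mulVec, dotProduct]

theorem momentPairing_Qs_eq (k j : ℤ) (n : ℕ) :
    momentPairing m n j (Qs m k n)
      = m (j - n) - ∑ l : Fin n,
          m (j - l) * (Ring.inverse (Tmat m k n) *ᵥ fun i : Fin n => m (k - n + i)) l := by
  simp only [momentPairing, sum_Icc_neg_natCast_zero, Qs_neg_natCast_self, Qs_neg_val, mul_one,
    mul_neg, sum_neg_distrib, ← sub_eq_add_neg]

theorem Hq_eq_momentPairing (n : ℕ) (k : ℤ) :
    Hq m n k = momentPairing m n (k + n) (Qs m k n) := by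
  rw [momentPairing_Qs_eq, Hq, add_sub_cancel_right]
  congr 1
  refine sum_congr rfl fun j _ => ?_
  simp only [mulVec, dotProduct, mul_sum, mul_assoc]

theorem Gq_sub_one_eq_momentPairing (n : ℕ) (k : ℤ) :
    Gq m n (k - 1) = momentPairing m n (k - 1) (Qs m k n) := by
  rw [momentPairing_Qs_eq, Gq, sub_add_cancel]
  congr 1
  refine sum_congr rfl fun j _ => ?_
  simp only [mulVec, dotProduct, mul_sum, mul_assoc]

theorem momentPairing_Qs_eq_zero {k : ℤ} {n : ℕ} (hT : IsUnit (Tmat m k n)) {i : ℕ}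
    (hi : i < n) :
    momentPairing m n (k + i) (Qs m k n) = 0 := by
  have hrow : ∀ x : Fin n → R,
      ∑ l : Fin n, m (k + i - l) * x l = (Tmat m k n *ᵥ x) ⟨i, hi⟩ := fun x => rfl
  rw [momentPairing_Qs_eq, hrow, mulVec_mulVec, Ring.mul_inverse_cancel _ hT, one_mulVec,
    sub_eq_zero]
  congr 1
  ring

theorem eq_zero_of_momentPairing_eq_zero {k : ℤ} {n : ℕ} (hT : IsUnit (Tmat m k n))
    {f : ℤ → R} (hf : ∀ e ∉ Ioc (-(n : ℤ)) 0, f e = 0)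
    (h : ∀ i < n, momentPairing m n (k + i) f = 0) :
    f = 0 := by
  set x : Fin n → R := fun l => f (-l)
  have hx : Tmat m k n *ᵥ x = 0 := by
    ext i
    rw [Pi.zero_apply, ← h i i.isLt, momentPairing, sum_Icc_neg_natCast_zero, hf _ (by simp),
      mul_zero, zero_add]
    rfl
  have hx0 : x = 0 := mulVec_injective_of_isUnit hT (by rw [hx, mulVec_zero])
  ext e
  by_cases he : e ∈ Ioc (-(n : ℤ)) 0
  · simp only [mem_Ioc] at he
    have hxe : f (-((-e).toNat : ℤ)) = 0 := congrFun hx0 ⟨(-e).toNat, by omega⟩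
    rwa [show -((-e).toNat : ℤ) = e by omega] at hxe
  · exact hf e he

theorem eq_Qs_of_momentPairing_eq_zero {k : ℤ} {n : ℕ} (hT : IsUnit (Tmat m k n))
    {f : ℤ → R} (hf : ∀ e ∉ Icc (-(n : ℤ)) 0, f e = 0) (hlead : f (-n) = 1)
    (h : ∀ i < n, momentPairing m n (k + i) f = 0) : f = Qs m k n := by
  refine sub_eq_zero.1 (eq_zero_of_momentPairing_eq_zero hT (fun e he => ?_) fun i hi => ?_)
  · by_cases hen : e = -n
    · rw [Pi.sub_apply, hen, hlead, Qs_neg_natCast_self, sub_self]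
    · have he' : e ∉ Icc (-(n : ℤ)) 0 := by simp only [mem_Icc, mem_Ioc] at he ⊢; omega
      rw [Pi.sub_apply, hf e he', Qs_eq_zero_of_notMem he', sub_self]
  · rw [show f - Qs m k n = fun e => f e - Qs m k n e from rfl, momentPairing_sub, h i hi,
      momentPairing_Qs_eq_zero hT hi, sub_self]

end Moments

section Recurrences

variable {R : Type*} [DivisionRing R] {m : ℤ → R} {k : ℤ} {ν : ℕ}

theorem Qs_succ_eq (hT1 : IsUnit (Tmat m k (ν + 1))) (hT2 : IsUnit (Tmat m k ν))
    (hT3 : IsUnit (Tmat m (k - 1) ν)) (hH : Hq m ν k ≠ 0) :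
    Qs m k (ν + 1) = fun e => Qs m (k - 1) ν (e + 1) - Qs m k ν e * psi m ν k := by
  have hQ1 : Qs m (k - 1) ν 1 = 0 := Qs_eq_zero_of_notMem (by simp)
  have hQν : Qs m k ν (-(ν + 1 : ℕ)) = 0 := Qs_eq_zero_of_notMem (by simp)
  refine (eq_Qs_of_momentPairing_eq_zero hT1 (fun e he => ?_) ?_ fun i hi => ?_).symm
  · simp only [mem_Icc] at he
    rw [Qs_eq_zero_of_notMem (by simp only [mem_Icc]; omega),
      Qs_eq_zero_of_notMem (e := e) (by simp only [mem_Icc]; omega), zero_mul, sub_zero]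
  · rw [hQν, zero_mul, sub_zero, show -((ν + 1 : ℕ) : ℤ) + 1 = -ν by push_cast; ring,
      Qs_neg_natCast_self]
  · rw [momentPairing_shift_sub_mul hQ1 hQν]
    rcases Nat.lt_succ_iff_lt_or_eq.1 hi with hi | rfl
    · rw [show k + i - 1 = k - 1 + i by ring, momentPairing_Qs_eq_zero hT3 hi,
        momentPairing_Qs_eq_zero hT2 hi, zero_mul, sub_zero]
    · rw [show k + i - 1 = k - 1 + i by ring, ← Hq_eq_momentPairing, ← Hq_eq_momentPairing,
        psi, mul_inv_cancel_left₀ hH, sub_self]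

theorem Gq_succ_eq (hT1 : IsUnit (Tmat m k (ν + 1))) (hT2 : IsUnit (Tmat m k ν))
    (hT3 : IsUnit (Tmat m (k - 1) ν)) (hH : Hq m ν k ≠ 0) :
    Gq m (ν + 1) (k - 1) = Gq m ν (k - 1 - 1) - Gq m ν (k - 1) * psi m ν k := by
  rw [Gq_sub_one_eq_momentPairing, Qs_succ_eq hT1 hT2 hT3 hH,
    momentPairing_shift_sub_mul (Qs_eq_zero_of_notMem (by simp))
      (Qs_eq_zero_of_notMem (by simp)),
    Gq_sub_one_eq_momentPairing, Gq_sub_one_eq_momentPairing]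

end Recurrences

theorem map_Qs_succ_eq {R : Type*} [DivisionRing R] {m : ℤ → R} {D : R → R}
    (hD_add : ∀ a b, D (a + b) = D a + D b) (hD_mul : ∀ a b, D (a * b) = D a * b + a * D b)
    (hm : ∀ j, D (m j) = m (j - 1)) {k : ℤ} {ν : ℕ} (hT1 : IsUnit (Tmat m k (ν + 1)))
    (hT2 : IsUnit (Tmat m k ν)) (hT3 : IsUnit (Tmat m (k - 1) ν)) (hH : Hq m ν k ≠ 0)
    (hG : Gq m ν (k - 1) ≠ 0) (e : ℤ) :
    D (Qs m k (ν + 1) e)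
      = (Qs m k ν (e + 1) - Qs m k (ν + 1) e) * (psi m ν k - phi m ν (k - 1)) := by
  set ξ := psi m ν k - phi m ν (k - 1)
  set F : ℤ → R := fun e => D (Qs m k (ν + 1) e) - (Qs m k ν (e + 1) - Qs m k (ν + 1) e) * ξ
  suffices F = 0 from sub_eq_zero.1 (congrFun this e)
  refine eq_zero_of_momentPairing_eq_zero hT1 (fun e he => ?_) fun i hi => ?_
  · by_cases hen : e = -(ν + 1 : ℕ)
    · have hlead : -((ν + 1 : ℕ) : ℤ) + 1 = -ν := by push_cast; ring
      simp only [F, hen, hlead, Qs_neg_natCast_self, map_one_of_leibniz hD_mul, sub_self,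
        zero_mul]
    · have h0 : e ∉ Icc (-((ν + 1 : ℕ) : ℤ)) 0 := by
        simp only [mem_Icc, mem_Ioc] at he ⊢; omega
      have h1 : e + 1 ∉ Icc (-(ν : ℤ)) 0 := by simp only [mem_Icc, mem_Ioc] at he ⊢; omega
      simp only [F, Qs_eq_zero_of_notMem h0, Qs_eq_zero_of_notMem h1,
        map_zero_of_map_add hD_add, sub_self, zero_mul]
  have hDQ := momentPairing_map hD_add hD_mul hm (ν + 1) (k + i) (Qs m k (ν + 1))
  rw [momentPairing_Qs_eq_zero hT1 hi, map_zero_of_map_add hD_add] at hDQ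
  simp only [F, momentPairing_sub, momentPairing_mul_right,
    momentPairing_shift (Qs_eq_zero_of_notMem (by simp) : Qs m k ν 1 = 0),
    momentPairing_Qs_eq_zero hT1 hi, sub_zero, eq_neg_of_add_eq_zero_right hDQ.symm]
  cases i with
  | zero =>
    rw [Nat.cast_zero, add_zero, ← Gq_sub_one_eq_momentPairing, ← Gq_sub_one_eq_momentPairing,
      Gq_succ_eq hT1 hT2 hT3 hH, mul_sub, phi, mul_inv_cancel_left₀ hG]
    abel
  | succ i =>
    rw [Nat.cast_succ, ← add_assoc, add_sub_cancel_right,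
      momentPairing_Qs_eq_zero hT1 (by omega), momentPairing_Qs_eq_zero hT2 (by omega), neg_zero,
      zero_mul, sub_zero]

theorem stmt_18_general {R : Type*} [DivisionRing R] (m : ℤ → R) (D : R → R)
    (hD_add : ∀ a b : R, D (a + b) = D a + D b)
    (hD_mul : ∀ a b : R, D (a * b) = D a * b + a * D b)
    (hm : ∀ j : ℤ, D (m j) = m (j - 1))
    (n : ℕ) (hn : 1 ≤ n)
    (hT1 : IsUnit (Tmat m 0 n))
    (hT2 : IsUnit (Tmat m 0 (n - 1)))
    (hT3 : IsUnit (Tmat m (-1) (n - 1)))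
    (hH1 : Hq m (n - 1) 0 ≠ 0)
    (hG1 : Gq m (n - 1) (-1) ≠ 0) :
    ∀ r : ℤ,
      D (Qs m 0 n r)
        = (Qs m 0 (n - 1) (r + 1) - Qs m 0 n r) *
            (psi m (n - 1) 0 - phi m (n - 1) (-1)) := by
  obtain ⟨ν, rfl⟩ : ∃ ν, n = ν + 1 := ⟨n - 1, by omega⟩
  rw [Nat.add_sub_cancel] at hT2 hT3 hH1 hG1 ⊢
  rw [← zero_sub] at hT3 hG1 ⊢
  exact map_Qs_succ_eq hD_add hD_mul hm hT1 hT2 hT3 hH1 hG1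

/-- Negative time flow of non-commutative Laurent bi-orthogonal polynomials: if `D` is a
derivation with `D(m_j) = m_{j−1}`, then
`∂_t (Q_n^{(0)})* = (z^{−1}·(Q_{n−1}^{(0)})* − (Q_n^{(0)})*)·ξ_{n−1}` with
`ξ_{n−1} = ψ_{n−1}^{(0)} − φ_{n−1}^{(−1)}`, coefficientwise. -/
theorem stmt_18 {R : Type*} [DivisionRing R] (m : ℤ → R) (D : R → R)
    (hD_add : ∀ a b : R, D (a + b) = D a + D b)
    (hD_mul : ∀ a b : R, D (a * b) = D a * b + a * D b)
    (hm : ∀ j : ℤ, D (m j) = m (j - 1))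
    (n : ℕ) (hn : 1 ≤ n)
    (hT1 : IsUnit (Tmat m 0 n))
    (hT2 : IsUnit (Tmat m 0 (n - 1)))
    (hT3 : IsUnit (Tmat m (-1) (n - 1)))
    (hH1 : Hq m (n - 1) 0 ≠ 0)
    (hH2 : Hq m (n - 1) (-1) ≠ 0)
    (hG1 : Gq m (n - 1) (-1) ≠ 0)
    (hG2 : Gq m (n - 1) (-2) ≠ 0) :
    ∀ r : ℤ,
      D (Qs m 0 n r)
        = (Qs m 0 (n - 1) (r + 1) - Qs m 0 n r) *
            (psi m (n - 1) 0 - phi m (n - 1) (-1)) :=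
  stmt_18_general m D hD_add hD_mul hm n hn hT1 hT2 hT3 hH1 hG1
end
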